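/- arXiv:1406.0199 — 13 statements merged into one kernel-verified Lean document; each statement's English description precedes it below -/
import Mathlib

section
/- Let $K$ be a field whose characteristic is $0$ or greater than $n$, and let $A, B \in M_n(K)$ satisfy $A^2 - 2AB + B^2 = 0$. Then $A$ and $B$ are simultaneously triangularizable over the algebraic closure $\overline{K}$, i.e. there exists $P \in GL_n(\overline{K})$ such that $P^{-1}AP$ and $P^{-1}BP$ are both upper triangular. -/
/-!
Put `D = A - B`; the hypothesis says exactly `D * B - B * D = D ^ 2`, hence
`D ^ k * B = (B + k • D) * D ^ k`. If `D` were invertible, `det (B + t • D)` would therefore take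
the value `det B` at `t = 0, 1, …, n`, which are distinct by the hypothesis on the characteristic;
being a polynomial of degree at most `n` in `t` with `t ^ n`-coefficient `det D`, it would be
constant, so `det D = 0`. The kernel of `D` is `B`-invariant, so over an algebraically closed field
it contains an eigenvector `v` of `B`, and `A v = B v + D v = B v`. Conjugating so that `v` becomes
the first basis vector, the first columns of `A` and `B` vanish below the diagonal, the hypothesis
passes to the lower-right `(n - 1) × (n - 1)` blocks, and induction on `n` concludes.
-/

open Matrix Polynomial Module

lemma natCast_injOn_Iic_of_ringChar {R : Type*} [NonAssocRing R] {m : ℕ}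
    (hchar : ringChar R = 0 ∨ m < ringChar R) : (Set.Iic m).InjOn (Nat.cast : ℕ → R) := by
  rcases hchar with h | h
  · have := (CharP.ringChar_zero_iff_CharZero R).mp h
    exact Nat.cast_injective.injOn
  · exact (CharP.natCast_injOn_Iio R (ringChar R)).mono (Set.Iic_subset_Iio.mpr h)

section Ring

variable {R : Type*} [Ring R]

lemma sub_mul_eq_mul_sub_add_sub_mul_sub_of_sq_sub_two_mul_add_sq_eq_zero {A B : R}
    (h : A ^ 2 - 2 * (A * B) + B ^ 2 = 0) :
    (A - B) * B = B * (A - B) + (A - B) * (A - B) := by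
  rw [← sub_eq_zero, ← neg_eq_zero, ← h]
  noncomm_ring

lemma pow_mul_eq_add_nsmul_mul_pow {B D : R} (h : D * B = B * D + D * D) (k : ℕ) :
    D ^ k * B = (B + k • D) * D ^ k := by
  induction k with
  | zero => simp
  | succ k ih =>
    calc D ^ (k + 1) * B = D * (D ^ k * B) := by rw [pow_succ', mul_assoc]
      _ = (D * B + k • (D * D)) * D ^ k := by rw [ih, ← mul_assoc, mul_add, mul_smul_comm]
      _ = (B + (k + 1) • D) * D ^ (k + 1) := by
        simp only [h, add_smul, one_smul, pow_succ', add_mul, smul_mul_assoc, mul_assoc]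
        abel

lemma units_conj_sq_sub_two_mul_add_sq_eq_zero (u : Rˣ) {A B : R}
    (h : A ^ 2 - 2 * (A * B) + B ^ 2 = 0) :
    (↑u⁻¹ * A * u) ^ 2 - 2 * ((↑u⁻¹ * A * u) * (↑u⁻¹ * B * u)) + (↑u⁻¹ * B * u) ^ 2 = 0 := by
  have hmul : ∀ X Y : R, (↑u⁻¹ * X * u) * (↑u⁻¹ * Y * u) = ↑u⁻¹ * (X * Y) * u := by
    intro X Y
    simp [mul_assoc]
  calc _ = ↑u⁻¹ * (A ^ 2 - 2 * (A * B) + B ^ 2) * u := by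
        rw [pow_two, pow_two, hmul, hmul, hmul]
        noncomm_ring
    _ = 0 := by rw [h, mul_zero, zero_mul]

end Ring

section Determinant

variable {R : Type*} [CommRing R] [IsDomain R] {n : Type*} [Fintype n] [DecidableEq n]

lemma det_add_smul_eq_det {B D : Matrix n n R} (h : D * B = B * D + D * D) (hD : D.det ≠ 0)
    (k : ℕ) : (B + (k : R) • D).det = B.det := by
  have := congrArg det (pow_mul_eq_add_nsmul_mul_pow h k)
  rw [← Nat.cast_smul_eq_nsmul R, det_mul, det_mul, det_pow, mul_comm] at this
  exact (mul_right_cancel₀ (pow_ne_zero k hD) this).symm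

theorem det_eq_zero_of_mul_eq_mul_add_mul_self [Nonempty n]
    (hchar : ringChar R = 0 ∨ Fintype.card n < ringChar R) {B D : Matrix n n R}
    (h : D * B = B * D + D * D) : D.det = 0 := by
  by_contra hD
  have hconst : det ((X : R[X]) • D.map C + B.map C) = C B.det := by
    refine eq_of_natDegree_lt_card_of_eval_eq _ _
      (f := fun k : Fin (Fintype.card n + 1) => ((k : ℕ) : R))
      (fun i j hij => Fin.ext (natCast_injOn_Iic_of_ringChar hchar i.is_le j.is_le hij))
      (fun k => ?_) ?_
    · rw [eval_C, ← coe_evalRingHom, RingHom.map_det, ← det_add_smul_eq_det h hD (k : ℕ),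
        add_comm B]
      congr 1
      ext i j
      simp [mul_comm (D i j)]
    · simpa [Nat.lt_succ_iff] using natDegree_det_X_add_C_le D B
  have := coeff_det_X_add_C_card D B
  rw [hconst, coeff_C, if_neg Fintype.card_ne_zero] at this
  exact hD this.symm

end Determinant

section CommonEigenvector

variable {F : Type*} [Field F] {n : Type*} [Fintype n] [DecidableEq n]

theorem exists_mem_ker_mulVec_eq_smul [IsAlgClosed F] {B D : Matrix n n F} (hD : D.det = 0)
    (hBD : ∀ v, D *ᵥ v = 0 → D *ᵥ (B *ᵥ v) = 0) :
    ∃ v ≠ 0, D *ᵥ v = 0 ∧ ∃ μ : F, B *ᵥ v = μ • v := by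
  let W := LinearMap.ker D.mulVecLin
  obtain ⟨v, hv, hDv⟩ := exists_mulVec_eq_zero_iff.mpr hD
  have : Nontrivial W := nontrivial_of_ne ⟨v, hDv⟩ 0 (by simpa [Subtype.ext_iff] using hv)
  obtain ⟨μ, hμ⟩ := End.exists_eigenvalue (B.mulVecLin.restrict (p := W) (q := W) hBD)
  obtain ⟨w, hw⟩ := hμ.exists_hasEigenvector
  exact ⟨w, fun h0 => hw.2 (Subtype.ext h0), w.2, μ, congrArg Subtype.val hw.apply_eq_smul⟩

theorem exists_common_eigenvector [IsAlgClosed F] [Nonempty n]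
    (hchar : ringChar F = 0 ∨ Fintype.card n < ringChar F) {A B : Matrix n n F}
    (h : A ^ 2 - 2 * (A * B) + B ^ 2 = 0) :
    ∃ v ≠ 0, ∃ μ : F, A *ᵥ v = μ • v ∧ B *ᵥ v = μ • v := by
  have hBD := sub_mul_eq_mul_sub_add_sub_mul_sub_of_sq_sub_two_mul_add_sq_eq_zero h
  obtain ⟨v, hv, hDv, μ, hBv⟩ := exists_mem_ker_mulVec_eq_smul
    (det_eq_zero_of_mul_eq_mul_add_mul_self hchar hBD) fun w hw => by
      rw [mulVec_mulVec, hBD, add_mulVec, ← mulVec_mulVec, ← mulVec_mulVec, hw, mulVec_zero,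
        mulVec_zero, add_zero]
  refine ⟨v, hv, μ, ?_, hBv⟩
  rw [← sub_add_cancel A B, add_mulVec, hDv, hBv, zero_add]

end CommonEigenvector

section FirstColumn

variable {F : Type*} [Field F] {m : ℕ}

lemma Module.exists_basis_fin_zero_eq {V : Type*} [AddCommGroup V] [Module F V]
    (hV : finrank F V = m + 1) {v : V} (hv : v ≠ 0) : ∃ b : Basis (Fin (m + 1)) F V, b 0 = v := by
  have : FiniteDimensional F V := .of_finrank_eq_succ hV
  have hs : LinearIndepOn F id {v} := .singleton hv
  let b := Basis.extend hs
  have hvb : v ∈ hs.extend (Set.subset_univ _) := hs.subset_extend _ rfl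
  let e₀ := b.indexEquiv (finBasisOfFinrankEq F V hV)
  refine ⟨b.reindex (e₀.trans (Equiv.swap (e₀ ⟨v, hvb⟩) 0)), ?_⟩
  simp [b, Basis.reindex_apply, Equiv.swap_apply_right]

lemma exists_GL_mulVec_single_zero_eq {v : Fin (m + 1) → F} (hv : v ≠ 0) :
    ∃ Q : GL (Fin (m + 1)) F, (Q : Matrix (Fin (m + 1)) (Fin (m + 1)) F) *ᵥ Pi.single 0 1 = v := by
  obtain ⟨b, hb⟩ := exists_basis_fin_zero_eq (finrank_fin_fun F) hv
  let _ := (Pi.basisFun F (Fin (m + 1))).invertibleToMatrix b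
  refine ⟨unitOfInvertible ((Pi.basisFun F (Fin (m + 1))).toMatrix b), ?_⟩
  ext i
  simp [Basis.toMatrix_apply, hb]

lemma conj_apply_succ_zero_eq_zero {Q : GL (Fin (m + 1)) F} {v : Fin (m + 1) → F}
    (hQ : (Q : Matrix (Fin (m + 1)) (Fin (m + 1)) F) *ᵥ Pi.single 0 1 = v)
    {X : Matrix (Fin (m + 1)) (Fin (m + 1)) F} {μ : F} (hX : X *ᵥ v = μ • v) (i : Fin m) :
    (((Q⁻¹ : GL (Fin (m + 1)) F) : Matrix (Fin (m + 1)) (Fin (m + 1)) F) * X * Q) i.succ 0 = 0 := by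
  rw [← col_apply (_ * Q.val) 0, ← mulVec_single_one, ← mulVec_mulVec, ← mulVec_mulVec, hQ, hX,
    mulVec_smul, ← hQ, mulVec_mulVec]
  simp

end FirstColumn

namespace Matrix

variable {R : Type*} {m : ℕ}

/-- The block-diagonal matrix `diag(1, P)`. -/
def blockDiagOne [Zero R] [One R] (P : Matrix (Fin m) (Fin m) R) :
    Matrix (Fin (m + 1)) (Fin (m + 1)) R :=
  of fun i j => Fin.cases (Fin.cases 1 0 j) (fun i' => Fin.cases 0 (P i') j) i

section Entries

variable [Zero R] [One R] (P : Matrix (Fin m) (Fin m) R)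

@[simp] lemma blockDiagOne_zero_zero : blockDiagOne P 0 0 = 1 := rfl

@[simp] lemma blockDiagOne_zero_succ (j : Fin m) : blockDiagOne P 0 j.succ = 0 := rfl

@[simp] lemma blockDiagOne_succ_zero (i : Fin m) : blockDiagOne P i.succ 0 = 0 := rfl

@[simp] lemma blockDiagOne_succ_succ (i j : Fin m) : blockDiagOne P i.succ j.succ = P i j := rfl

@[simp] lemma submatrix_blockDiagOne : (blockDiagOne P).submatrix Fin.succ Fin.succ = P := rfl

end Entries

lemma blockDiagOne_mul [NonAssocSemiring R] (P Q : Matrix (Fin m) (Fin m) R) :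
    blockDiagOne P * blockDiagOne Q = blockDiagOne (P * Q) := by
  ext i j
  refine Fin.cases ?_ (fun i' => ?_) i <;> refine Fin.cases ?_ (fun j' => ?_) j <;>
    simp [mul_apply, Fin.sum_univ_succ]

lemma blockDiagOne_one [NonAssocSemiring R] :
    blockDiagOne (1 : Matrix (Fin m) (Fin m) R) = 1 := by
  ext i j
  refine Fin.cases ?_ (fun i' => ?_) i <;> refine Fin.cases ?_ (fun j' => ?_) j <;>
    simp [one_apply, Fin.succ_ne_zero, (Fin.succ_ne_zero _).symm]

def blockDiagOneHom [Semiring R] :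
    Matrix (Fin m) (Fin m) R →* Matrix (Fin (m + 1)) (Fin (m + 1)) R where
  toFun := blockDiagOne
  map_one' := blockDiagOne_one
  map_mul' P Q := (blockDiagOne_mul P Q).symm

section FirstColumnZero

variable [NonUnitalNonAssocSemiring R] {X Y : Matrix (Fin (m + 1)) (Fin (m + 1)) R}

lemma mul_apply_succ_zero_eq_zero (hX : ∀ i : Fin m, X i.succ 0 = 0)
    (hY : ∀ i : Fin m, Y i.succ 0 = 0) (i : Fin m) : (X * Y) i.succ 0 = 0 := by
  simp [mul_apply, Fin.sum_univ_succ, hX, hY]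

lemma submatrix_succ_mul (hX : ∀ i : Fin m, X i.succ 0 = 0)
    (Y : Matrix (Fin (m + 1)) (Fin (m + 1)) R) :
    (X * Y).submatrix Fin.succ Fin.succ =
      X.submatrix Fin.succ Fin.succ * Y.submatrix Fin.succ Fin.succ := by
  ext i j
  simp [mul_apply, Fin.sum_univ_succ, hX]

end FirstColumnZero

lemma blockTriangular_id_of_submatrix_succ [Zero R] {X : Matrix (Fin (m + 1)) (Fin (m + 1)) R}
    (hX : ∀ i : Fin m, X i.succ 0 = 0) (h : (X.submatrix Fin.succ Fin.succ).BlockTriangular id) :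
    X.BlockTriangular id := by
  intro i j hji
  induction i using Fin.cases with
  | zero => exact absurd hji (Fin.not_lt_zero j)
  | succ i =>
    induction j using Fin.cases with
    | zero => exact hX i
    | succ j => exact h (Fin.succ_lt_succ_iff.mp hji)

lemma sq_sub_two_mul_add_sq_submatrix_succ_eq_zero [Ring R]
    {A B : Matrix (Fin (m + 1)) (Fin (m + 1)) R} (hA : ∀ i : Fin m, A i.succ 0 = 0)
    (hB : ∀ i : Fin m, B i.succ 0 = 0) (h : A ^ 2 - 2 * (A * B) + B ^ 2 = 0) :
    (A.submatrix Fin.succ Fin.succ) ^ 2 -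
        2 * (A.submatrix Fin.succ Fin.succ * B.submatrix Fin.succ Fin.succ) +
      (B.submatrix Fin.succ Fin.succ) ^ 2 = 0 := by
  have h' : (A * A - (A * B + A * B) + B * B).submatrix Fin.succ Fin.succ = 0 := by
    rw [← pow_two, ← pow_two, ← two_mul, h, submatrix_zero]
    rfl
  rw [pow_two, pow_two, two_mul, ← submatrix_succ_mul hA, ← submatrix_succ_mul hA,
    ← submatrix_succ_mul hB]
  exact h'

lemma blockTriangular_blockDiagOne_mul_mul [Semiring R] {X : Matrix (Fin (m + 1)) (Fin (m + 1)) R}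
    (hX : ∀ i : Fin m, X i.succ 0 = 0) {P P' : Matrix (Fin m) (Fin m) R}
    (h : (P' * X.submatrix Fin.succ Fin.succ * P).BlockTriangular id) :
    (blockDiagOne P' * X * blockDiagOne P).BlockTriangular id := by
  have hP'X : ∀ i : Fin m, (blockDiagOne P' * X) i.succ 0 = 0 :=
    mul_apply_succ_zero_eq_zero (by simp) hX
  refine blockTriangular_id_of_submatrix_succ (mul_apply_succ_zero_eq_zero hP'X (by simp)) ?_
  rwa [submatrix_succ_mul hP'X, submatrix_succ_mul (by simp), submatrix_blockDiagOne,
    submatrix_blockDiagOne]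

end Matrix

theorem exists_GL_conj_blockTriangular {F : Type*} [Field F] [IsAlgClosed F] :
    ∀ {m : ℕ}, (ringChar F = 0 ∨ m < ringChar F) → ∀ A B : Matrix (Fin m) (Fin m) F,
      A ^ 2 - 2 * (A * B) + B ^ 2 = 0 → ∃ P : GL (Fin m) F,
        (((P⁻¹ : GL (Fin m) F) : Matrix (Fin m) (Fin m) F) * A *
          (P : Matrix (Fin m) (Fin m) F)).BlockTriangular id ∧
        (((P⁻¹ : GL (Fin m) F) : Matrix (Fin m) (Fin m) F) * B *
          (P : Matrix (Fin m) (Fin m) F)).BlockTriangular id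
  | 0, _, _, _, _ => ⟨1, fun i => Fin.elim0 i, fun i => Fin.elim0 i⟩
  | m + 1, hchar, A, B, h => by
    obtain ⟨v, hv, μ, hAv, hBv⟩ :=
      exists_common_eigenvector (n := Fin (m + 1)) (by simpa using hchar) h
    obtain ⟨Q, hQ⟩ := exists_GL_mulVec_single_zero_eq hv
    have hA₁ := conj_apply_succ_zero_eq_zero hQ hAv
    have hB₁ := conj_apply_succ_zero_eq_zero hQ hBv
    obtain ⟨P, hPA, hPB⟩ := exists_GL_conj_blockTriangular (hchar.imp_right (by omega)) _ _
      (sq_sub_two_mul_add_sq_submatrix_succ_eq_zero hA₁ hB₁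
        (units_conj_sq_sub_two_mul_add_sq_eq_zero Q h))
    have hconj : ∀ X : Matrix (Fin (m + 1)) (Fin (m + 1)) F,
        (((Q * Units.map blockDiagOneHom P)⁻¹ : GL (Fin (m + 1)) F) :
          Matrix (Fin (m + 1)) (Fin (m + 1)) F) * X *
          ((Q * Units.map blockDiagOneHom P : GL (Fin (m + 1)) F) :
            Matrix (Fin (m + 1)) (Fin (m + 1)) F) =
        blockDiagOne ((P⁻¹ : GL (Fin m) F) : Matrix (Fin m) (Fin m) F) *
          (((Q⁻¹ : GL (Fin (m + 1)) F) : Matrix (Fin (m + 1)) (Fin (m + 1)) F) * X * Q) *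
            blockDiagOne (P : Matrix (Fin m) (Fin m) F) := by
      intro X
      simp [blockDiagOneHom, mul_assoc]
    refine ⟨Q * Units.map blockDiagOneHom P, ?_, ?_⟩ <;> rw [hconj]
    exacts [blockTriangular_blockDiagOne_mul_mul hA₁ hPA,
      blockTriangular_blockDiagOne_mul_mul hB₁ hPB]

/-- If `K` is a field of characteristic `0` or greater than `n` and
`A, B ∈ Mₙ(K)` satisfy `A² - 2AB + B² = 0`, then `A` and `B` are simultaneously
triangularizable over the algebraic closure of `K`. -/
theorem stmt0 (n : ℕ) (K : Type*) [Field K]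
    (hchar : ringChar K = 0 ∨ n < ringChar K)
    (A B : Matrix (Fin n) (Fin n) K)
    (h : A ^ 2 - 2 * (A * B) + B ^ 2 = 0) :
    ∃ P : GL (Fin n) (AlgebraicClosure K),
      (((P⁻¹ : GL (Fin n) (AlgebraicClosure K)) : Matrix (Fin n) (Fin n) (AlgebraicClosure K)) *
          A.map (algebraMap K (AlgebraicClosure K)) *
          (P : Matrix (Fin n) (Fin n) (AlgebraicClosure K))).BlockTriangular id ∧
      (((P⁻¹ : GL (Fin n) (AlgebraicClosure K)) : Matrix (Fin n) (Fin n) (AlgebraicClosure K)) *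
          B.map (algebraMap K (AlgebraicClosure K)) *
          (P : Matrix (Fin n) (Fin n) (AlgebraicClosure K))).BlockTriangular id := by
  have hmap := congrArg (algebraMap K (AlgebraicClosure K)).mapMatrix h
  simp only [map_add, map_sub, map_mul, map_pow, map_ofNat, map_zero] at hmap
  exact exists_GL_conj_blockTriangular (by rwa [← Algebra.ringChar_eq K]) _ _ hmap
end

section
/- Let $K$ be a field whose characteristic is $0$ or greater than $n$, and let $A, B \in M_n(K)$ be such that $AB - BA = f(A)$ for some polynomial $f$ with coefficients in $K$. Then $A$ and $B$ are simultaneously triangularizable over the algebraic closure $\overline{K}$. -/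
/-!
Write `C = AB - BA = f(A)`. For every polynomial `g` one has `[g(A), B] = g'(A) f(A)`, so `B`
preserves each generalized eigenspace `W` of `A`, say for the eigenvalue `α`. On `W` the trace of
`C` vanishes, `C` being a commutator there, while `C - f(α)` is nilpotent; hence
`f(α) · dim W = 0`, and the hypothesis on the characteristic gives `f(α) = 0`. Then `C` kills the
`α`-eigenspace of `A`, which is therefore `B`-invariant, and an eigenvector of `B` in it is a common
eigenvector of `A` and `B`. Putting it first in a basis, the relation passes to the lower right
`(n - 1) × (n - 1)` blocks, and induction on `n` triangularizes both matrices.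
-/

open Polynomial Module Set

section Commutator

variable {R A A' : Type*} [CommRing R] [Ring A] [Algebra R A] [Ring A'] [Algebra R A']

theorem aeval_mul_sub_mul_aeval {a b : A} {f : R[X]} (h : a * b - b * a = aeval a f) (g : R[X]) :
    aeval a g * b - b * aeval a g = aeval a (derivative g * f) := by
  induction g using Polynomial.induction_on with
  | C c => simp [Algebra.commutes]
  | add p q hp hq =>
    simp only [map_add, add_mul, mul_add, ← hp, ← hq]
    abel
  | monomial n c ih =>
    set p := C c * X ^ n
    rw [pow_succ, ← mul_assoc, derivative_mul, derivative_X, mul_one]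
    -- Leibniz rule for the derivation `x ↦ x * b - b * x`
    calc aeval a (p * X) * b - b * aeval a (p * X)
        = aeval a p * (a * b - b * a) + (aeval a p * b - b * aeval a p) * a := by
          rw [map_mul, aeval_X]; noncomm_ring
      _ = aeval a ((derivative p * X + p) * f) := by
          rw [h, ih, add_mul, mul_right_comm, map_add, map_mul _ _ X, aeval_X, ← map_mul, add_comm]

theorem mul_sub_mul_eq_aeval_map {a b : A} {f : R[X]} (h : a * b - b * a = aeval a f)
    (φ : A →ₐ[R] A') : φ a * φ b - φ b * φ a = aeval (φ a) f := by
  rw [← map_mul, ← map_mul, ← map_sub, h, aeval_algHom_apply]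

theorem Units.conj_mul_sub_mul_eq_aeval {a b : A} {f : R[X]} (h : a * b - b * a = aeval a f)
    (u : Aˣ) :
    (↑u⁻¹ * a * ↑u) * (↑u⁻¹ * b * ↑u) - (↑u⁻¹ * b * ↑u) * (↑u⁻¹ * a * ↑u) =
      aeval (↑u⁻¹ * a * ↑u) f := by
  simpa [ConjAct.units_smul_def] using
    mul_sub_mul_eq_aeval_map h (MulSemiringAction.toAlgEquiv R A (ConjAct.toConjAct u⁻¹)).toAlgHom

end Commutator

namespace Module.End

variable {F V : Type*} [Field F] [AddCommGroup V] [Module F V] {A B : End F V} {f : F[X]}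

theorem coe_aeval_restrict_apply {W : Submodule F V} (hA : MapsTo A W W) (g : F[X]) (x : W) :
    (aeval (A.restrict hA) g x : V) = aeval A g x := by
  induction g using Polynomial.induction_on generalizing x with
  | C c => simp [algebraMap_end_apply]
  | add p q hp hq => simp [hp, hq]
  | monomial n c ih =>
    rw [pow_succ, ← mul_assoc, map_mul _ _ X, map_mul _ _ X, aeval_X, aeval_X, mul_apply,
      mul_apply, ih]
    rfl

theorem restrict_mul_sub_mul_eq_aeval (h : A * B - B * A = aeval A f) {W : Submodule F V}
    (hA : MapsTo A W W) (hB : MapsTo B W W) :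
    A.restrict hA * B.restrict hB - B.restrict hB * A.restrict hA = aeval (A.restrict hA) f := by
  ext x
  rw [coe_aeval_restrict_apply, ← h]
  rfl

theorem aeval_sq_apply_eq_zero (h : A * B - B * A = aeval A f) (p : F[X]) {v : V}
    (hv : aeval A p v = 0) : aeval A (p ^ 2) (B v) = 0 := by
  have hcomm := congr($(aeval_mul_sub_mul_aeval h (p ^ 2)) v)
  rw [LinearMap.sub_apply, mul_apply, mul_apply, sub_eq_iff_eq_add] at hcomm
  rw [hcomm, derivative_sq, show C 2 * p * derivative p * f = C 2 * derivative p * f * p by ring,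
    pow_two, map_mul, map_mul _ p, mul_apply, mul_apply, hv, map_zero, map_zero, zero_add, map_zero]

theorem mapsTo_maxGenEigenspace_of_mul_sub_mul_eq_aeval (h : A * B - B * A = aeval A f) (α : F) :
    MapsTo B (A.maxGenEigenspace α) (A.maxGenEigenspace α) := by
  have hpow : ∀ k, (A - α • 1) ^ k = aeval A ((X - C α) ^ k) := fun k => by
    rw [map_pow, map_sub, aeval_X, aeval_C, algebraMap_end_eq_smul_id]; rfl
  intro v hv
  obtain ⟨k, hk⟩ := (mem_maxGenEigenspace A α v).mp hv
  refine (mem_maxGenEigenspace A α (B v)).mpr ⟨2 * k, ?_⟩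
  rw [hpow, pow_mul', aeval_sq_apply_eq_zero h _ (by rwa [← hpow])]

theorem mapsTo_eigenspace_of_mul_sub_mul_eq_aeval (h : A * B - B * A = aeval A f) {α : F}
    (hα : f.eval α = 0) : MapsTo B (A.eigenspace α) (A.eigenspace α) := by
  intro v hv
  rw [SetLike.mem_coe, mem_eigenspace_iff] at hv ⊢
  have hcomm := congr($h v)
  rwa [LinearMap.sub_apply, mul_apply, mul_apply, hv, aeval_apply_of_mem_apply_eq_smul hv, hα,
    zero_smul, map_smul, sub_eq_zero] at hcomm

theorem eval_eq_zero_of_isNilpotent_sub_algebraMap [FiniteDimensional F V]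
    (h : A * B - B * A = aeval A f) {α : F} (hA : IsNilpotent (A - algebraMap F (End F V) α))
    (hV : (finrank F V : F) ≠ 0) : f.eval α = 0 := by
  have htrace : LinearMap.trace F V (aeval A f) = 0 := by
    rw [← h, map_sub, LinearMap.trace_mul_comm, sub_self]
  obtain ⟨g, hg⟩ := X_sub_C_dvd_sub_C_eval (a := α) (p := f)
  -- `f(A) - f(α)` is divisible by the nilpotent `A - α` in the commutative algebra `F[A]`
  have hnil : IsNilpotent (aeval A f - algebraMap F (End F V) (f.eval α)) := by
    rw [← aeval_C A, ← map_sub, hg, map_mul]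
    refine ((Commute.all _ g).map (aeval A)).isNilpotent_mul_right ?_
    rwa [map_sub, aeval_X, aeval_C]
  have := (LinearMap.isNilpotent_trace_of_isNilpotent hnil).eq_zero
  rw [map_sub, htrace, Algebra.algebraMap_eq_smul_one, map_smul, LinearMap.trace_one, zero_sub,
    neg_eq_zero, smul_eq_mul] at this
  exact (mul_eq_zero.mp this).resolve_right hV

theorem eval_eq_zero_of_hasEigenvalue [FiniteDimensional F V]
    (hchar : ∀ d : ℕ, 0 < d → d ≤ finrank F V → (d : F) ≠ 0)
    (h : A * B - B * A = aeval A f) {α : F} (hα : A.HasEigenvalue α) : f.eval α = 0 := by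
  set W := A.maxGenEigenspace α
  have hAW : MapsTo A W W := mapsTo_maxGenEigenspace_of_comm (Commute.refl A) α
  have : Nontrivial W := Submodule.nontrivial_iff_ne_bot.mpr <|
    ne_bot_of_le_ne_bot hα ((A.genEigenspace α).monotone le_top)
  refine eval_eq_zero_of_isNilpotent_sub_algebraMap
    (restrict_mul_sub_mul_eq_aeval h hAW (mapsTo_maxGenEigenspace_of_mul_sub_mul_eq_aeval h α))
    ?_ (hchar _ finrank_pos (Submodule.finrank_le W))
  convert isNilpotent_restrict_maxGenEigenspace_sub_algebraMap A α using 1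
  ext
  rfl

theorem exists_eigenvector_of_mul_sub_mul_eq_aeval [IsAlgClosed F] [FiniteDimensional F V]
    [Nontrivial V] (hchar : ∀ d : ℕ, 0 < d → d ≤ finrank F V → (d : F) ≠ 0)
    (h : A * B - B * A = aeval A f) :
    ∃ v : V, v ≠ 0 ∧ ∃ a b : F, A v = a • v ∧ B v = b • v := by
  obtain ⟨α, hα⟩ := exists_eigenvalue A
  have hB := mapsTo_eigenspace_of_mul_sub_mul_eq_aeval h (eval_eq_zero_of_hasEigenvalue hchar h hα)
  have : Nontrivial (A.eigenspace α) := Submodule.nontrivial_iff_ne_bot.mpr hα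
  obtain ⟨u, hu⟩ := (exists_eigenvalue (B.restrict hB)).choose_spec.exists_hasEigenvector
  exact ⟨u, fun h0 => hu.2 (Subtype.ext h0), α, _, mem_eigenspace_iff.mp u.2,
    congr_arg Subtype.val (mem_eigenspace_iff.mp hu.1)⟩

end Module.End

theorem exists_linearIndependent_apply_zero_eq {K V : Type*} [DivisionRing K] [AddCommGroup V]
    [Module K V] {v : V} (hv : v ≠ 0) :
    ∀ {k : ℕ}, k < finrank K V → ∃ w : Fin (k + 1) → V, LinearIndependent K w ∧ w 0 = v
  | 0, _ => ⟨![v], LinearIndependent.of_subsingleton (ι := Fin 1) 0 hv, rfl⟩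
  | k + 1, hk => by
    obtain ⟨w, hw, hw0⟩ := exists_linearIndependent_apply_zero_eq (K := K) hv (k := k) (by omega)
    obtain ⟨x, hx⟩ := exists_linearIndependent_snoc_of_lt_finrank hw hk
    exact ⟨Fin.snoc w x, hx, by simpa using hw0⟩

namespace Matrix

theorem exists_eigenvector_of_mul_sub_mul_eq_aeval {F n : Type*} [Field F] [IsAlgClosed F]
    [Fintype n] [DecidableEq n] [Nonempty n]
    (hchar : ∀ d : ℕ, 0 < d → d ≤ Fintype.card n → (d : F) ≠ 0) {A B : Matrix n n F} {f : F[X]}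
    (h : A * B - B * A = aeval A f) :
    ∃ v : n → F, v ≠ 0 ∧ ∃ a b : F, A *ᵥ v = a • v ∧ B *ᵥ v = b • v :=
  Module.End.exists_eigenvector_of_mul_sub_mul_eq_aeval (by simpa using hchar)
    (mul_sub_mul_eq_aeval_map h toLinAlgEquiv'.toAlgHom)

theorem exists_GL_mulVec_single_zero_eq {F : Type*} [Field F] {m : ℕ} {v : Fin (m + 1) → F}
    (hv : v ≠ 0) :
    ∃ P : GL (Fin (m + 1)) F, (P : Matrix (Fin (m + 1)) (Fin (m + 1)) F) *ᵥ Pi.single 0 1 = v := by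
  obtain ⟨w, hw, hw0⟩ := exists_linearIndependent_apply_zero_eq (K := F) hv (k := m) (by simp)
  have hP : IsUnit (of fun i j => w j i) := linearIndependent_cols_iff_isUnit.mp hw
  exact ⟨hP.unit, by rw [IsUnit.unit_spec, mulVec_single_one, ← hw0]; rfl⟩

variable {R : Type*} [CommRing R] {m : ℕ}

theorem blockTriangular_ne_zero_iff {M : Matrix (Fin (m + 1)) (Fin (m + 1)) R} :
    M.BlockTriangular (· ≠ 0) ↔ ∀ i : Fin m, M i.succ 0 = 0 := by
  refine ⟨fun hM i => hM (by simp [lt_iff_not_ge, Fin.succ_ne_zero]), fun hM i j hij => ?_⟩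
  simp only [lt_iff_not_ge, le_Prop_eq, Classical.not_imp, not_not] at hij
  obtain ⟨i, rfl⟩ := Fin.exists_succ_eq.mpr hij.1
  rw [hij.2]
  exact hM i

def lowerRightBlockAlgHom :
    blockTriangularSubalgebra R R (· ≠ (0 : Fin (m + 1))) →ₐ[R] Matrix (Fin m) (Fin m) R where
  toFun M := (M : Matrix (Fin (m + 1)) (Fin (m + 1)) R).submatrix Fin.succ Fin.succ
  map_one' := submatrix_one_embedding ⟨Fin.succ, Fin.succ_injective m⟩
  map_mul' M N := by
    ext i j
    simp [mul_apply, Fin.sum_univ_succ, blockTriangular_ne_zero_iff.mp M.2 i]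
  map_zero' := rfl
  map_add' _ _ := rfl
  commutes' r := by
    ext i j
    simp [algebraMap_matrix_apply]

theorem submatrix_succ_mul_sub_mul_eq_aeval {A B : Matrix (Fin (m + 1)) (Fin (m + 1)) R}
    {f : R[X]} (hA : A.BlockTriangular (· ≠ 0)) (hB : B.BlockTriangular (· ≠ 0))
    (h : A * B - B * A = aeval A f) :
    A.submatrix Fin.succ Fin.succ * B.submatrix Fin.succ Fin.succ
      - B.submatrix Fin.succ Fin.succ * A.submatrix Fin.succ Fin.succ
      = aeval (A.submatrix Fin.succ Fin.succ) f := by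
  let a : blockTriangularSubalgebra R R (· ≠ (0 : Fin (m + 1))) := ⟨A, hA⟩
  let b : blockTriangularSubalgebra R R (· ≠ (0 : Fin (m + 1))) := ⟨B, hB⟩
  have hab : a * b - b * a = aeval a f := Subtype.ext (by simpa [aeval_subalgebra_coe] using h)
  exact mul_sub_mul_eq_aeval_map hab lowerRightBlockAlgHom

theorem blockTriangular_ne_zero_inv_mul_mul {P : GL (Fin (m + 1)) R} {v : Fin (m + 1) → R}
    (hP : (P : Matrix (Fin (m + 1)) (Fin (m + 1)) R) *ᵥ Pi.single 0 1 = v)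
    {M : Matrix (Fin (m + 1)) (Fin (m + 1)) R} {c : R} (hM : M *ᵥ v = c • v) :
    ((P⁻¹ : GL (Fin (m + 1)) R) * M * P : Matrix (Fin (m + 1)) (Fin (m + 1)) R).BlockTriangular
      (· ≠ 0) := by
  have hcol : ((P⁻¹ : GL (Fin (m + 1)) R) * M * P : Matrix (Fin (m + 1)) (Fin (m + 1)) R) *ᵥ
      Pi.single 0 1 = c • Pi.single 0 1 := by
    rw [← mulVec_mulVec, hP, ← mulVec_mulVec, hM, mulVec_smul, ← hP, mulVec_mulVec,
      Units.inv_mul, one_mulVec]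
  refine blockTriangular_ne_zero_iff.mpr fun i => ?_
  simpa [Fin.succ_ne_zero] using congrFun hcol i.succ

/-- `X ↦ diag(1, X)`. -/
def cornerExtendHom : Matrix (Fin m) (Fin m) R →* Matrix (Fin (m + 1)) (Fin (m + 1)) R where
  toFun X := of (Fin.cons (Pi.single 0 1) fun i => Fin.cons 0 (X i))
  map_one' := by
    ext i j
    refine Fin.cases ?_ (fun i => ?_) i <;> refine Fin.cases ?_ (fun j => ?_) j <;>
      simp [one_apply, Fin.succ_ne_zero, (Fin.succ_ne_zero _).symm]
  map_mul' X Y := by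
    ext i j
    refine Fin.cases ?_ (fun i => ?_) i <;> refine Fin.cases ?_ (fun j => ?_) j <;>
      simp [mul_apply, Fin.sum_univ_succ, Pi.single_apply, Fin.succ_ne_zero]

theorem blockTriangular_cornerExtendHom_mul_mul {M : Matrix (Fin (m + 1)) (Fin (m + 1)) R}
    (hM : M.BlockTriangular (· ≠ 0)) {X Y : Matrix (Fin m) (Fin m) R}
    (h : (X * M.submatrix Fin.succ Fin.succ * Y).BlockTriangular id) :
    (cornerExtendHom X * M * cornerExtendHom Y).BlockTriangular id := by
  have hM0 := blockTriangular_ne_zero_iff.mp hM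
  intro i j hij
  obtain ⟨i, rfl⟩ := Fin.exists_succ_eq.mpr (Fin.pos_iff_ne_zero.mp (lt_of_le_of_lt j.zero_le hij))
  rcases Fin.eq_zero_or_eq_succ j with rfl | ⟨j, rfl⟩
  · simp [mul_apply, Fin.sum_univ_succ, cornerExtendHom, hM0]
  · simpa [mul_apply, Fin.sum_univ_succ, cornerExtendHom] using h (Fin.succ_lt_succ_iff.mp hij)

theorem exists_GL_blockTriangular_of_mul_sub_mul_eq_aeval {F : Type*} [Field F] [IsAlgClosed F]
    {m : ℕ} (hchar : ∀ d : ℕ, 0 < d → d ≤ m → (d : F) ≠ 0) {A B : Matrix (Fin m) (Fin m) F}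
    {f : F[X]} (h : A * B - B * A = aeval A f) :
    ∃ P : GL (Fin m) F,
      ((P⁻¹ : GL (Fin m) F) * A * P : Matrix (Fin m) (Fin m) F).BlockTriangular id ∧
      ((P⁻¹ : GL (Fin m) F) * B * P : Matrix (Fin m) (Fin m) F).BlockTriangular id := by
  induction m with
  | zero => exact ⟨1, fun i => i.elim0, fun i => i.elim0⟩
  | succ m ih =>
    obtain ⟨v, hv, a, b, hAv, hBv⟩ :=
      exists_eigenvector_of_mul_sub_mul_eq_aeval (by simpa using hchar) h
    obtain ⟨Q, hQ⟩ := exists_GL_mulVec_single_zero_eq hv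
    have hA := blockTriangular_ne_zero_inv_mul_mul hQ hAv
    have hB := blockTriangular_ne_zero_inv_mul_mul hQ hBv
    obtain ⟨P, hPA, hPB⟩ := ih (fun d hd hdm => hchar d hd (hdm.trans m.le_succ))
      (submatrix_succ_mul_sub_mul_eq_aeval hA hB (Units.conj_mul_sub_mul_eq_aeval h Q))
    have hconj (M : Matrix (Fin (m + 1)) (Fin (m + 1)) F) :
        (((Q * Units.map cornerExtendHom P)⁻¹ : GL (Fin (m + 1)) F) * M *
          (Q * Units.map cornerExtendHom P : GL (Fin (m + 1)) F) :
            Matrix (Fin (m + 1)) (Fin (m + 1)) F) =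
        cornerExtendHom ((P⁻¹ : GL (Fin m) F) : Matrix (Fin m) (Fin m) F) *
          ((Q⁻¹ : GL (Fin (m + 1)) F) * M * Q : Matrix (Fin (m + 1)) (Fin (m + 1)) F) *
          cornerExtendHom (P : Matrix (Fin m) (Fin m) F) := by
      simp [mul_assoc]
    exact ⟨Q * Units.map cornerExtendHom P,
      hconj A ▸ blockTriangular_cornerExtendHom_mul_mul hA hPA,
      hconj B ▸ blockTriangular_cornerExtendHom_mul_mul hB hPB⟩

end Matrix

theorem natCast_ne_zero_of_ringChar {R : Type*} [NonAssocSemiring R] {n d : ℕ}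
    (hchar : ringChar R = 0 ∨ n < ringChar R) (hd : 0 < d) (hdn : d ≤ n) : (d : R) ≠ 0 := by
  rw [ne_eq, ringChar.spec]
  intro hdvd
  rcases hchar with h0 | hlt
  · rw [h0, zero_dvd_iff] at hdvd
    omega
  · exact absurd (Nat.le_of_dvd hd hdvd) (by omega)

/-- If `K` is a field of characteristic `0` or greater than `n` and
`A, B ∈ Mₙ(K)` satisfy `AB - BA = f(A)` for a polynomial `f` over `K`, then `A` and `B`
are simultaneously triangularizable over the algebraic closure of `K`. -/
theorem stmt1 (n : ℕ) (K : Type*) [Field K]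
    (hchar : ringChar K = 0 ∨ n < ringChar K)
    (A B : Matrix (Fin n) (Fin n) K) (f : Polynomial K)
    (h : A * B - B * A = Polynomial.aeval A f) :
    ∃ P : GL (Fin n) (AlgebraicClosure K),
      (((P⁻¹ : GL (Fin n) (AlgebraicClosure K)) : Matrix (Fin n) (Fin n) (AlgebraicClosure K)) *
          A.map (algebraMap K (AlgebraicClosure K)) *
          (P : Matrix (Fin n) (Fin n) (AlgebraicClosure K))).BlockTriangular id ∧
      (((P⁻¹ : GL (Fin n) (AlgebraicClosure K)) : Matrix (Fin n) (Fin n) (AlgebraicClosure K)) *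
          B.map (algebraMap K (AlgebraicClosure K)) *
          (P : Matrix (Fin n) (Fin n) (AlgebraicClosure K))).BlockTriangular id := by
  have hchar' (d : ℕ) (hd : 0 < d) (hdn : d ≤ n) : (d : AlgebraicClosure K) ≠ 0 := by
    rw [← map_natCast (algebraMap K (AlgebraicClosure K))]
    exact (_root_.map_ne_zero _).mpr (natCast_ne_zero_of_ringChar hchar hd hdn)
  have hrel := mul_sub_mul_eq_aeval_map h (Algebra.ofId K (AlgebraicClosure K)).mapMatrix
  rw [← aeval_map_algebraMap (AlgebraicClosure K)] at hrel
  exact Matrix.exists_GL_blockTriangular_of_mul_sub_mul_eq_aeval hchar' hrel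
end

section
/- Let $K$ be a field of characteristic different from $2$ and let $A, B \in M_2(K)$ satisfy $A^2 - 2AB + B^2 = 0$. Then $AB = BA$. -/
/-- Cayley–Hamilton for 2×2 matrices, proved entrywise. -/
lemma ch_fin_two {K : Type*} [Field K] (M : Matrix (Fin 2) (Fin 2) K) :
    M * M = (Matrix.trace M) • M - (M.det) • 1 := by
  ext i j
  fin_cases i <;> fin_cases j <;>
    simp [Matrix.mul_apply, Matrix.trace, Matrix.det_fin_two, Fin.sum_univ_succ,
      Matrix.one_apply] <;> ring

/-- Over a field of characteristic different from `2`, if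
`A, B ∈ M₂(K)` satisfy `A² - 2AB + B² = 0`, then `AB = BA`. -/
theorem stmt2 (K : Type*) [Field K] (hchar : ringChar K ≠ 2)
    (A B : Matrix (Fin 2) (Fin 2) K)
    (h : A ^ 2 - 2 * (A * B) + B ^ 2 = 0) :
    A * B = B * A := by
  have h2 : (2 : K) ≠ 0 := Ring.two_ne_zero hchar
  set C : Matrix (Fin 2) (Fin 2) K := A - B with hC
  -- C² = AB - BA
  have h1 : C * C = A * B - B * A := by
    have : C * C - (A * B - B * A) = A ^ 2 - 2 * (A * B) + B ^ 2 := by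
      rw [hC]; noncomm_ring
    rw [h] at this
    exact sub_eq_zero.mp this
  -- C² = CA - AC
  have h1' : C * C = C * A - A * C := by
    have : C * C - (C * A - A * C) = A ^ 2 - 2 * (A * B) + B ^ 2 := by
      rw [hC]; noncomm_ring
    rw [h] at this
    exact sub_eq_zero.mp this
  -- 2 C³ = C²A - AC²
  have h3 : C * C * C + C * (C * C) = (C * C) * A - A * (C * C) := by
    calc C * C * C + C * (C * C)
        = (C * A - A * C) * C + C * (C * A - A * C) := by rw [← h1']
      _ = (C * C) * A - A * (C * C) := by noncomm_ring
  set t : K := Matrix.trace C with ht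
  set d : K := Matrix.det C with hd
  have hch : C * C = t • C - d • 1 := ch_fin_two C
  -- trace C² = 0
  have htr2 : t * t - 2 * d = 0 := by
    have e1 : Matrix.trace (C * C) = t * t - 2 * d := by
      rw [hch]
      simp [Matrix.trace_sub, Matrix.trace_smul, Matrix.trace_one]
      ring
    have e2 : Matrix.trace (C * C) = 0 := by
      rw [h1']
      simp [Matrix.trace_sub, Matrix.trace_mul_comm C A]
    rw [e2] at e1; exact e1.symm
  -- trace C³ = 0
  have htd : t * d = 0 := by
    have e0 : Matrix.trace (C * C * C + C * (C * C)) = 0 := by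
      rw [h3]
      simp [Matrix.trace_sub, Matrix.trace_mul_comm (C * C) A]
    have e1 : Matrix.trace (C * C * C) = t * t * t - 3 * t * d := by
      have : C * C * C = (t * t - d) • C - (t * d) • 1 := by
        rw [hch]; rw [sub_mul, smul_mul_assoc, hch, smul_mul_assoc, one_mul]
        rw [smul_sub, smul_smul, smul_smul]
        module
      rw [this]
      simp [Matrix.trace_sub, Matrix.trace_smul, Matrix.trace_one]
      ring
    have e2 : Matrix.trace (C * (C * C)) = t * t * t - 3 * t * d := by
      rw [← mul_assoc]; exact e1
    rw [Matrix.trace_add, e1, e2] at e0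
    have e0' : t * t * t - 3 * (t * d) = 0 := by
      have e2x : (2 : K) * (t * t * t - 3 * (t * d)) = 0 := by linear_combination e0
      exact (mul_eq_zero.mp e2x).resolve_left h2
    linear_combination -e0' + t * htr2
  have ht3 : t * t * t = 0 := by linear_combination t * htr2 + 2 * htd
  have ht0 : t = 0 := by
    rcases mul_eq_zero.mp ht3 with h' | h'
    · rcases mul_eq_zero.mp h' with h'' | h'' <;> exact h''
    · exact h'
  have hd0 : d = 0 := by
    rw [ht0] at htr2
    have e2x : (2 : K) * d = 0 := by linear_combination -htr2
    exact (mul_eq_zero.mp e2x).resolve_left h2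
  have hCC : C * C = 0 := by rw [hch, ht0, hd0]; simp
  rw [h1] at hCC
  exact sub_eq_zero.mp hCC
end

section
/- Let $K$ be a field whose characteristic is $0$ or greater than $n$, and let $A, B \in M_n(K)$ satisfy $A^2 - 2AB + B^2 = 0$. If every eigenvalue of $A$ (in the algebraic closure $\overline{K}$) has algebraic multiplicity at most $2$, then $AB = BA$. -/
/-!
With `C = A - B` the hypothesis reads `C A = A C + C²`, and `A B - B A = C²`, so it suffices to
show `C² = 0`. Inductively `C^k A = (A + k C) C^k`.

First, `C` is nilpotent: on the stable range `W` of `C`, which `A` preserves and on which `C` is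
invertible, the relation becomes `A C⁻¹ - C⁻¹ A = 1`; taking traces, `dim W = 0` in `K`, hence
`W = 0` by the assumption on the characteristic.

Second, the kernels `ker C^k` are `A`-invariant, and `C` maps a vector of `ker C^(k+1) \ ker C^k`
that is an eigenvector of `A` modulo `ker C^k` to one of `ker C^k \ ker C^(k-1)` that is an
eigenvector modulo `ker C^(k-1)`, for the same eigenvalue. Since the characteristic polynomial is
multiplicative along invariant subspaces, each of these layers adds one to the multiplicity of that
eigenvalue. Starting from an eigenvector of `A` modulo `ker C^(m-1)` over `K̄`, where `m` is the
nilpotency index of `C`, the multiplicity is at least `m`, so `m ≤ 2`.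
-/

open Polynomial Module

theorem pow_mul_eq_add_nsmul_mul {R : Type*} [Ring R] {f g : R} (h : g * f = f * g + g ^ 2)
    (k : ℕ) : g ^ k * f = (f + k • g) * g ^ k := by
  induction k with
  | zero => simp
  | succ k ih =>
    calc g ^ (k + 1) * f = g * (g ^ k * f) := by rw [pow_succ', mul_assoc]
      _ = (g * f + k • g ^ 2) * g ^ k := by rw [ih, ← mul_assoc, mul_add, mul_smul_comm, sq]
      _ = (f + (k + 1) • g) * g ^ (k + 1) := by
        rw [h, add_smul, one_smul, pow_succ' g k]
        simp only [add_mul, smul_mul_assoc, mul_assoc, sq]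
        abel

theorem mul_pow_eq_pow_mul_sub_nsmul {R : Type*} [Ring R] {f g : R} (h : g * f = f * g + g ^ 2)
    (k : ℕ) : f * g ^ k = g ^ k * (f - k • g) := by
  rw [mul_sub, pow_mul_eq_add_nsmul_mul h, mul_smul_comm, ← pow_succ, pow_succ', add_mul,
    smul_mul_assoc, add_sub_cancel_right]

theorem Units.mul_inv_sub_inv_mul_eq_one {R : Type*} [Ring R] {f : R} (u : Rˣ)
    (h : u * f = f * u + u ^ 2) : f * ↑u⁻¹ - ↑u⁻¹ * f = 1 := by
  have := congrArg (fun x : R => (↑u⁻¹ : R) * x * ↑u⁻¹) h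
  simp only [mul_add, add_mul, mul_assoc, sq, Units.mul_inv, mul_one,
    Units.inv_mul_cancel_left] at this
  rw [this, add_sub_cancel_left]

section

variable {K V : Type*} [Field K] [AddCommGroup V] [Module K V]

theorem LinearMap.natCast_finrank_eq_zero_of_mul_sub_mul_eq_one [FiniteDimensional K V]
    {f h : Module.End K V} (hfh : f * h - h * f = 1) : (finrank K V : K) = 0 := by
  have := congrArg (LinearMap.trace K V) hfh
  rwa [map_sub, LinearMap.trace_mul_comm, sub_self, LinearMap.trace_one, eq_comm] at this

theorem eq_zero_of_natCast_eq_zero_of_le {N d : ℕ} (hchar : ringChar K = 0 ∨ N < ringChar K)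
    (hd : d ≤ N) (h : (d : K) = 0) : d = 0 := by
  have hdvd := ringChar.dvd h
  rcases hchar with h0 | hlt
  · rwa [h0, zero_dvd_iff] at hdvd
  · exact Nat.eq_zero_of_dvd_of_lt hdvd (hd.trans_lt hlt)

theorem LinearMap.ker_pow_le_comap_ker_pow {f g : Module.End K V} (h : g * f = f * g + g ^ 2)
    (k : ℕ) : LinearMap.ker (g ^ k) ≤ (LinearMap.ker (g ^ k)).comap f := by
  intro v hv
  rw [Submodule.mem_comap, LinearMap.mem_ker] at *
  rw [← Module.End.mul_apply, pow_mul_eq_add_nsmul_mul h, Module.End.mul_apply, hv, map_zero]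

theorem LinearMap.range_pow_le_comap_range_pow {f g : Module.End K V} (h : g * f = f * g + g ^ 2)
    (k : ℕ) : LinearMap.range (g ^ k) ≤ (LinearMap.range (g ^ k)).comap f := by
  rintro _ ⟨v, rfl⟩
  exact ⟨(f - k • g) v, by rw [← Module.End.mul_apply, ← mul_pow_eq_pow_mul_sub_nsmul h]; rfl⟩

theorem LinearMap.isNilpotent_of_mul_eq_mul_add_sq [FiniteDimensional K V]
    (hchar : ringChar K = 0 ∨ finrank K V < ringChar K) {f g : Module.End K V}
    (h : g * f = f * g + g ^ 2) : IsNilpotent g := by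
  obtain ⟨a, ha⟩ := Filter.eventually_atTop.mp g.eventually_iInf_range_pow_eq
  set W := LinearMap.range (g ^ a)
  have hW : LinearMap.range (g ^ (a + 1)) = W := (ha (a + 1) a.le_succ).symm.trans (ha a le_rfl)
  have hgW : W ≤ W.comap g := by
    rintro _ ⟨y, rfl⟩
    exact ⟨g y, by rw [← Module.End.mul_apply, ← pow_succ, pow_succ']; rfl⟩
  set g₀ : Module.End K W := g.restrict hgW
  set f₀ : Module.End K W := f.restrict (LinearMap.range_pow_le_comap_range_pow h a)
  have hg₀ : Function.Surjective g₀ := by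
    rintro ⟨x, hx⟩
    obtain ⟨z, rfl⟩ : x ∈ LinearMap.range (g ^ (a + 1)) := hW ▸ hx
    exact ⟨⟨(g ^ a) z, z, rfl⟩, Subtype.ext (by simp [g₀, pow_succ'])⟩
  obtain ⟨u, hu⟩ : IsUnit g₀ := (Module.End.isUnit_iff g₀).mpr
    ⟨LinearMap.injective_iff_surjective.mpr hg₀, hg₀⟩
  have h₀ : g₀ * f₀ = f₀ * g₀ + g₀ ^ 2 := by
    ext x
    simpa [g₀, f₀, sq] using LinearMap.congr_fun h x
  have hWcast : (finrank K W : K) = 0 := LinearMap.natCast_finrank_eq_zero_of_mul_sub_mul_eq_one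
    (Units.mul_inv_sub_inv_mul_eq_one u (hu ▸ h₀))
  have hW0 : W = ⊥ := Submodule.finrank_eq_zero.mp
    (eq_zero_of_natCast_eq_zero_of_le hchar (Submodule.finrank_le W) hWcast)
  exact ⟨a, LinearMap.range_eq_bot.mp hW0⟩

theorem LinearMap.charpoly_eq_charpoly_restrict_mul_charpoly_mapQ [Infinite K]
    [FiniteDimensional K V] (f : Module.End K V) {U : Submodule K V} (hU : U ≤ U.comap f) :
    f.charpoly = (f.restrict hU).charpoly * (U.mapQ U f hU).charpoly := by
  refine Polynomial.funext fun t => ?_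
  have ht : U ≤ U.comap (algebraMap K _ t - f) := fun x hx =>
    U.sub_mem (U.smul_mem t hx) (hU hx)
  rw [eval_mul, LinearMap.eval_charpoly, LinearMap.eval_charpoly, LinearMap.eval_charpoly,
    LinearMap.det_eq_det_mul_det U _ ht]
  congr 2
  ext; simp

theorem LinearMap.rootMultiplicity_charpoly_restrict_lt [Infinite K] [FiniteDimensional K V]
    (f : Module.End K V) {U : Submodule K V} (hU : U ≤ U.comap f) {μ : K} {v : V} (hv : v ∉ U)
    (hfv : f v - μ • v ∈ U) :
    (f.restrict hU).charpoly.rootMultiplicity μ < f.charpoly.rootMultiplicity μ := by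
  have hμ : Module.End.HasEigenvalue (U.mapQ U f hU) μ :=
    Module.End.hasEigenvalue_of_hasEigenvector (x := U.mkQ v)
      ⟨Module.End.mem_eigenspace_iff.mpr ((Submodule.Quotient.eq U).mpr hfv), by simpa using hv⟩
  rw [f.charpoly_eq_charpoly_restrict_mul_charpoly_mapQ hU,
    rootMultiplicity_mul ((charpoly_monic _).mul (charpoly_monic _)).ne_zero,
    lt_add_iff_pos_right, rootMultiplicity_pos (charpoly_monic _).ne_zero]
  exact (Module.End.hasEigenvalue_iff_isRoot_charpoly _ _).mp hμ

theorem LinearMap.rootMultiplicity_charpoly_restrict_lt_of_le [Infinite K] [FiniteDimensional K V]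
    (f : Module.End K V) {U W : Submodule K V} (hU : U ≤ U.comap f) (hW : W ≤ W.comap f)
    (hUW : U ≤ W) {μ : K} {w : V} (hwW : w ∈ W) (hwU : w ∉ U) (hfw : f w - μ • w ∈ U) :
    (f.restrict hU).charpoly.rootMultiplicity μ < (f.restrict hW).charpoly.rootMultiplicity μ := by
  set fW : Module.End K W := f.restrict hW
  have hU' : U.comap W.subtype ≤ (U.comap W.subtype).comap fW := fun x hx => hU hx
  have hconj : (Submodule.comapSubtypeEquivOfLe hUW).conj (fW.restrict hU') = f.restrict hU := by
    ext; simp [fW]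
  rw [← hconj, LinearEquiv.charpoly_conj]
  exact fW.rootMultiplicity_charpoly_restrict_lt hU' (v := ⟨w, hwW⟩) hwU hfw

theorem LinearMap.le_rootMultiplicity_charpoly_restrict_ker_pow [Infinite K]
    [FiniteDimensional K V] {f g : Module.End K V} (h : g * f = f * g + g ^ 2) (μ : K) (k : ℕ)
    {v : V} (hv : (g ^ (k + 1)) v = 0) (hkv : (g ^ k) v ≠ 0) (hfv : (g ^ k) (f v - μ • v) = 0) :
    k ≤ (f.restrict (LinearMap.ker_pow_le_comap_ker_pow h k)).charpoly.rootMultiplicity μ := by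
  induction k generalizing v with
  | zero => exact Nat.zero_le _
  | succ k ih =>
    have hpow : ∀ j w, (g ^ (j + 1)) w = (g ^ j) (g w) := fun j w => by rw [pow_succ]; rfl
    have hgv : (g ^ (k + 1)) (g v) = 0 := by rwa [← hpow]
    have hkgv : (g ^ k) (g v) ≠ 0 := by rwa [← hpow]
    have hfgv : (g ^ k) (f (g v) - μ • g v) = 0 := by
      have hcomm := LinearMap.congr_fun h v
      simp only [Module.End.mul_apply, LinearMap.add_apply, sq] at hcomm
      have hshift : f (g v) - μ • g v = g (f v - μ • v) - g (g v) := by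
        rw [map_sub, map_smul, hcomm]; abel
      rw [hshift, map_sub, ← hpow, ← hpow, hfv, ← hpow, hv, sub_zero]
    refine Nat.succ_le_of_lt ((ih hgv hkgv hfgv).trans_lt ?_)
    refine f.rootMultiplicity_charpoly_restrict_lt_of_le _ _ (fun x hx => ?_) hgv hkgv hfgv
    rw [LinearMap.mem_ker, pow_succ', Module.End.mul_apply, LinearMap.mem_ker.mp hx, map_zero]

theorem LinearMap.exists_le_rootMultiplicity_charpoly [IsAlgClosed K] [FiniteDimensional K V]
    {f g : Module.End K V} (h : g * f = f * g + g ^ 2) {k : ℕ} (hk : g ^ (k + 1) = 0)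
    (hk' : g ^ k ≠ 0) : ∃ μ, k + 1 ≤ f.charpoly.rootMultiplicity μ := by
  set U := LinearMap.ker (g ^ k)
  have hU := LinearMap.ker_pow_le_comap_ker_pow h k
  have : Nontrivial (V ⧸ U) :=
    Submodule.Quotient.nontrivial_iff.mpr fun htop => hk' (LinearMap.ker_eq_top.mp htop)
  obtain ⟨μ, hμ⟩ := Module.End.exists_eigenvalue (U.mapQ U f hU)
  obtain ⟨q, hq⟩ := hμ.exists_hasEigenvector
  obtain ⟨v, rfl⟩ := U.mkQ_surjective q
  have hvU : v ∉ U := fun hv => hq.2 ((Submodule.Quotient.mk_eq_zero U).mpr hv)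
  have hfv : f v - μ • v ∈ U :=
    (Submodule.Quotient.eq U).mp (Module.End.mem_eigenspace_iff.mp hq.1)
  refine ⟨μ, Nat.succ_le_of_lt ((LinearMap.le_rootMultiplicity_charpoly_restrict_ker_pow h μ k
    ?_ hvU hfv).trans_lt (f.rootMultiplicity_charpoly_restrict_lt hU hvU hfv))⟩
  rw [hk, LinearMap.zero_apply]

theorem LinearMap.sq_eq_zero_of_rootMultiplicity_charpoly_le_two [IsAlgClosed K]
    [FiniteDimensional K V] {f g : Module.End K V} (h : g * f = f * g + g ^ 2)
    (hg : IsNilpotent g) (hf : ∀ μ, f.charpoly.rootMultiplicity μ ≤ 2) : g ^ 2 = 0 := by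
  by_contra hg2
  have : Nontrivial (Module.End K V) := nontrivial_of_ne _ _ hg2
  have hc : nilpotencyClass g - 1 + 1 = nilpotencyClass g :=
    Nat.sub_add_cancel (pos_nilpotencyClass_iff.mpr hg)
  obtain ⟨μ, hμ⟩ := LinearMap.exists_le_rootMultiplicity_charpoly h
    (hc.symm ▸ pow_nilpotencyClass hg) (pow_pred_nilpotencyClass hg)
  exact hg2 (pow_eq_zero_of_le (hc ▸ hμ.trans (hf μ)) (pow_nilpotencyClass hg))

namespace Matrix

variable {ι : Type*} [Fintype ι] [DecidableEq ι]

theorem isNilpotent_of_mul_eq_mul_add_sq (hchar : ringChar K = 0 ∨ Fintype.card ι < ringChar K)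
    {A C : Matrix ι ι K} (h : C * A = A * C + C ^ 2) : IsNilpotent C := by
  rw [← IsNilpotent.map_iff (f := toLinAlgEquiv') toLinAlgEquiv'.injective]
  exact LinearMap.isNilpotent_of_mul_eq_mul_add_sq (f := toLinAlgEquiv' A) (by simpa using hchar)
    (by simpa using congrArg toLinAlgEquiv' h)

theorem sq_eq_zero_of_rootMultiplicity_charpoly_le_two [IsAlgClosed K] {A C : Matrix ι ι K}
    (h : C * A = A * C + C ^ 2) (hC : IsNilpotent C)
    (hA : ∀ μ, A.charpoly.rootMultiplicity μ ≤ 2) : C ^ 2 = 0 := by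
  apply toLinAlgEquiv'.injective
  rw [map_pow, map_zero]
  exact LinearMap.sq_eq_zero_of_rootMultiplicity_charpoly_le_two (f := toLinAlgEquiv' A)
    (by simpa using congrArg toLinAlgEquiv' h) (hC.map _) (charpoly_toLin' A ▸ hA)

end Matrix

end

/-- Let `K` be a field of characteristic `0` or greater than `n`, and let
`A, B ∈ Mₙ(K)` satisfy `A² - 2AB + B² = 0`. If every eigenvalue of `A` in the algebraic
closure of `K` has algebraic multiplicity at most `2` (i.e. multiplicity as a root of the
characteristic polynomial), then `AB = BA`. -/
theorem stmt3 (n : ℕ) (K : Type*) [Field K]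
    (hchar : ringChar K = 0 ∨ n < ringChar K)
    (A B : Matrix (Fin n) (Fin n) K)
    (h : A ^ 2 - 2 * (A * B) + B ^ 2 = 0)
    (hmult : ∀ μ : AlgebraicClosure K,
      ((A.map (algebraMap K (AlgebraicClosure K))).charpoly).rootMultiplicity μ ≤ 2) :
    A * B = B * A := by
  have hrel : (A - B) * A = A * (A - B) + (A - B) ^ 2 := by
    rw [← sub_eq_zero, ← neg_eq_zero, ← h]; noncomm_ring
  have hnil := Matrix.isNilpotent_of_mul_eq_mul_add_sq (by simpa using hchar) hrel
  set φ := (algebraMap K (AlgebraicClosure K)).mapMatrix (m := Fin n)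
  have hsq : (A - B) ^ 2 = 0 := by
    refine (map_eq_zero_iff φ (Matrix.map_injective (algebraMap K _).injective)).mp ?_
    rw [map_pow]
    exact Matrix.sq_eq_zero_of_rootMultiplicity_charpoly_le_two (A := φ A)
      (by simpa using congrArg φ hrel) (hnil.map φ) hmult
  rw [← sub_eq_zero, show A * B - B * A = (A - B) ^ 2 - (A ^ 2 - 2 * (A * B) + B ^ 2) by
    noncomm_ring, hsq, h, sub_zero]
end

section
/- Let $K$ be a field whose characteristic is $0$ or greater than $3$, and let $A, B \in M_3(K)$ satisfy $A^2 - 2AB + B^2 = 0$ with $AB \neq BA$. Then there exist an invertible matrix $P \in GL_3(\overline{K})$ and a scalar $\lambda \in K$ with $\lambda = \frac{1}{3}\mathrm{trace}(A)$ such that $P^{-1}AP$ and $P^{-1}BP$ are both upper triangular matrices with all diagonal entries equal to $\lambda$. -/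
open Matrix

lemma ch3 {K : Type*} [Field K] (h2 : (2:K) ≠ 0) (M : Matrix (Fin 3) (Fin 3) K) :
    M ^ 3 - M.trace • M ^ 2 + (((M.trace) ^ 2 - (M * M).trace) / 2) • M - M.det • 1 = 0 := by
  ext i j
  simp only [Matrix.sub_apply, Matrix.add_apply, Matrix.smul_apply, Matrix.zero_apply,
    Matrix.one_apply, pow_succ, pow_zero, one_mul, Matrix.mul_apply, Fin.sum_univ_three,
    Matrix.trace_fin_three, Matrix.det_fin_three, smul_eq_mul]
  fin_cases i <;> fin_cases j <;> simp <;> field_simp <;> ring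

lemma nilp3 {K : Type*} [Field K] (h2 : (2:K) ≠ 0) (h3 : (3:K) ≠ 0)
    (C B : Matrix (Fin 3) (Fin 3) K) (hCB : C * B - B * C = C ^ 2) :
    C ^ 3 = 0 := by
  have tr : ∀ k : ℕ, (C ^ (k + 2)).trace = 0 := by
    intro k
    have e1 : C ^ (k + 2) = C ^ k * (C * B) - C ^ k * (B * C) := by
      rw [← mul_sub, hCB, ← pow_add]
    have e2 : (C ^ k * (C * B)).trace = (C ^ (k+1) * B).trace := by
      rw [← mul_assoc, ← pow_succ]
    have e3 : (C ^ k * (B * C)).trace = (C ^ (k+1) * B).trace := by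
      rw [← mul_assoc, Matrix.trace_mul_comm, ← mul_assoc, ← pow_succ']
    rw [e1, Matrix.trace_sub, e2, e3, sub_self]
  have t2 : (C * C).trace = 0 := by
    have := tr 0; simpa [pow_succ] using this
  have t3 : (C^3).trace = 0 := tr 1
  have t4 : (C^4).trace = 0 := tr 2
  have t2' : (C ^ 2).trace = 0 := by rw [pow_two]; exact t2
  have ch := ch3 h2 C
  rw [t2] at ch
  have trch := congrArg Matrix.trace ch
  simp only [Matrix.trace_sub, Matrix.trace_add, Matrix.trace_smul, Matrix.trace_zero,
    Matrix.trace_one, smul_eq_mul, Fintype.card_fin, Nat.cast_ofNat] at trch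
  rw [t3, t2'] at trch
  have hdet : C.trace ^ 3 = 6 * C.det := by
    field_simp at trch
    linear_combination trch
  have ch2 := congrArg (fun X => (X * C).trace) ch
  simp only [zero_mul, sub_mul, add_mul, smul_mul_assoc, one_mul, Matrix.trace_sub,
    Matrix.trace_add, Matrix.trace_smul, Matrix.trace_zero, smul_eq_mul] at ch2
  rw [← pow_succ] at ch2
  rw [show C ^ 2 * C = C ^ 3 from (pow_succ C 2).symm, show C * C = C ^ 2 from (pow_two C).symm,
    t2', t3, t4] at ch2
  have hdt : C.det * C.trace = 0 := by linear_combination -ch2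
  have h6 : (6:K) ≠ 0 := by
    intro hh
    rcases mul_eq_zero.mp (show (2:K) * 3 = 0 by norm_num at hh ⊢; linear_combination hh) with h | h
    exacts [h2 h, h3 h]
  have ht14 : C.trace ^ 4 = 0 := by linear_combination C.trace * hdet + 6 * hdt
  have ht1z : C.trace = 0 := pow_eq_zero_iff (by norm_num : (4:ℕ) ≠ 0) |>.mp ht14
  have hdz : C.det = 0 := by
    have : (6:K) * C.det = 0 := by rw [← hdet, ht1z]; ring
    exact (mul_eq_zero.mp this).resolve_left h6
  rw [ht1z, hdz] at ch
  simpa using ch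

lemma reduce3 {K : Type*} [Field K] (C : Matrix (Fin 3) (Fin 3) K)
    (h3 : C ^ 3 = 0) (h2ne : C ^ 2 ≠ 0) :
    ∃ P : Matrix (Fin 3) (Fin 3) K, IsUnit P.det ∧
      C * P = P * !![0,1,0;0,0,1;0,0,0] := by
  set N : Matrix (Fin 3) (Fin 3) K := !![0,1,0;0,0,1;0,0,0] with hNdef
  obtain ⟨i0, j0, hij⟩ : ∃ i j, (C ^ 2) i j ≠ 0 := by
    by_contra hc
    push_neg at hc
    exact h2ne (by ext i j; simpa using hc i j)
  set v : Fin 3 → K := fun k => if k = j0 then 1 else 0 with hv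
  have hC2v : (C ^ 2).mulVec v = fun i => (C ^ 2) i j0 := by
    funext i
    simp [Matrix.mulVec, dotProduct, hv, mul_ite]
  set col : Fin 3 → Fin 3 → K := ![(C ^ 2).mulVec v, C.mulVec v, v] with hcol
  set P : Matrix (Fin 3) (Fin 3) K := Matrix.of fun i k => col k i with hP
  have hc0 : C.mulVec (col 0) = 0 := by
    show C.mulVec ((C ^ 2).mulVec v) = 0
    rw [Matrix.mulVec_mulVec, ← pow_succ', h3, Matrix.zero_mulVec]
  have hc1 : C.mulVec (col 1) = col 0 := by
    show C.mulVec (C.mulVec v) = (C ^ 2).mulVec v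
    rw [Matrix.mulVec_mulVec, ← pow_two]
  have hc2 : C.mulVec (col 2) = col 1 := rfl
  have hL : ∀ i k, (C * P) i k = C.mulVec (col k) i := by
    intro i k
    simp [Matrix.mul_apply, Matrix.mulVec, dotProduct, hP]
  have hCP : C * P = P * N := by
    ext i k
    rw [hL]
    fin_cases k
    · show (C.mulVec (col 0)) i = (P * N) i 0
      rw [hc0]
      simp [hNdef, Matrix.mul_apply, Fin.sum_univ_three, hP, Matrix.vecHead, Matrix.vecTail]
    · show (C.mulVec (col 1)) i = (P * N) i 1
      rw [hc1]
      simp [hNdef, Matrix.mul_apply, Fin.sum_univ_three, hP, Matrix.vecHead, Matrix.vecTail]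
    · show (C.mulVec (col 2)) i = (P * N) i 2
      rw [hc2]
      simp [hNdef, Matrix.mul_apply, Fin.sum_univ_three, hP, Matrix.vecHead, Matrix.vecTail]
  refine ⟨P, ?_, hCP⟩
  rw [isUnit_iff_ne_zero]
  intro hdet
  obtain ⟨x, hx0, hx⟩ := (Matrix.exists_mulVec_eq_zero_iff).mpr hdet
  have hPmv : ∀ y : Fin 3 → K, P.mulVec y = fun i => y 0 * col 0 i + y 1 * col 1 i + y 2 * col 2 i := by
    intro y
    funext i
    simp [Matrix.mulVec, dotProduct, Fin.sum_univ_three, hP, mul_comm]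
  have hCCP : C * C * P = P * (N * N) := by
    rw [mul_assoc, hCP, ← mul_assoc, hCP, mul_assoc]
  have hNNx : (N * N).mulVec x = ![x 2, 0, 0] := by
    funext i
    fin_cases i <;> simp [hNdef, Matrix.mulVec, Matrix.mul_apply, dotProduct, Fin.sum_univ_three]
  have col0ne : col 0 i0 ≠ 0 := by
    show ((C ^ 2).mulVec v) i0 ≠ 0
    rw [hC2v]
    exact hij
  have hx2 : x 2 = 0 := by
    have e1 : (C * C).mulVec (P.mulVec x) = P.mulVec ((N * N).mulVec x) := by
      rw [Matrix.mulVec_mulVec, hCCP, ← Matrix.mulVec_mulVec]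
    rw [hx, Matrix.mulVec_zero, hNNx] at e1
    have := congrFun (e1.symm.trans rfl) i0
    rw [hPmv] at this
    simp at this
    rcases this with h | h
    · exact h
    · exact absurd h col0ne
  have hNx : N.mulVec x = ![x 1, x 2, 0] := by
    funext i
    fin_cases i <;> simp [hNdef, Matrix.mulVec, Matrix.mul_apply, dotProduct, Fin.sum_univ_three]
  have hx1 : x 1 = 0 := by
    have e1 : C.mulVec (P.mulVec x) = P.mulVec (N.mulVec x) := by
      rw [Matrix.mulVec_mulVec, hCP, ← Matrix.mulVec_mulVec]
    rw [hx, Matrix.mulVec_zero, hNx] at e1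
    have := congrFun e1.symm i0
    rw [hPmv] at this
    simp [hx2] at this
    rcases this with h | h
    · exact h
    · exact absurd h col0ne
  have hx0' : x 0 = 0 := by
    have := congrFun hx i0
    rw [hPmv] at this
    simp [hx1, hx2] at this
    rcases this with h | h
    · exact h
    · exact absurd h col0ne
  exact hx0 (by funext k; fin_cases k <;> simp [hx0', hx1, hx2])

lemma entries3 {K : Type*} [Field K] (B' : Matrix (Fin 3) (Fin 3) K)
    (hNB : !![0,1,0;0,0,1;0,0,0] * B' - B' * !![(0:K),1,0;0,0,1;0,0,0]
        = !![0,1,0;0,0,1;0,0,0] * !![0,1,0;0,0,1;0,0,0]) :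
    B' 1 0 = 0 ∧ B' 2 0 = 0 ∧ B' 2 1 = 0 ∧ B' 1 1 = B' 0 0 ∧ B' 2 2 = B' 0 0 := by
  have e : ∀ i j, (!![(0:K),1,0;0,0,1;0,0,0] * B' - B' * !![(0:K),1,0;0,0,1;0,0,0]) i j
      = (!![(0:K),1,0;0,0,1;0,0,0] * !![(0:K),1,0;0,0,1;0,0,0]) i j := fun i j => by rw [hNB]
  have e00 := e 0 0
  have e10 := e 1 0
  have e11 := e 1 1
  have e01 := e 0 1
  have e12 := e 1 2
  simp [Matrix.mul_apply, Fin.sum_univ_three, Matrix.sub_apply, Matrix.vecHead, Matrix.vecTail,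
    Matrix.vecMul, dotProduct] at e00 e10 e11 e01 e12
  refine ⟨e00, e10, ?_, ?_, ?_⟩
  · linear_combination e11 + e00
  · linear_combination e01
  · linear_combination e12 + e01

lemma tri3 {L : Type*} [CommRing L] (M : Matrix (Fin 3) (Fin 3) L)
    (h10 : M 1 0 = 0) (h20 : M 2 0 = 0) (h21 : M 2 1 = 0) : M.BlockTriangular id := by
  intro i j hij
  fin_cases i <;> fin_cases j <;> simp_all [Matrix.BlockTriangular]

/-- Let `K` be a field of characteristic `0` or greater than `3`, and let
`A, B ∈ M₃(K)` satisfy `A² - 2AB + B² = 0` with `AB ≠ BA`. Then there are `P ∈ GL₃(K̄)` and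
`λ = (1/3) trace A ∈ K` such that `P⁻¹AP` and `P⁻¹BP` are upper triangular with all
diagonal entries equal to `λ`. -/
theorem stmt4 (K : Type*) [Field K]
    (hchar : ringChar K = 0 ∨ 3 < ringChar K)
    (A B : Matrix (Fin 3) (Fin 3) K)
    (h : A ^ 2 - 2 * (A * B) + B ^ 2 = 0)
    (hne : A * B ≠ B * A) :
    ∃ (P : GL (Fin 3) (AlgebraicClosure K)) (lam : K),
      lam = (1 / 3 : K) * Matrix.trace A ∧
      (((P⁻¹ : GL (Fin 3) (AlgebraicClosure K)) : Matrix (Fin 3) (Fin 3) (AlgebraicClosure K)) *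
          A.map (algebraMap K (AlgebraicClosure K)) *
          (P : Matrix (Fin 3) (Fin 3) (AlgebraicClosure K))).BlockTriangular id ∧
      (((P⁻¹ : GL (Fin 3) (AlgebraicClosure K)) : Matrix (Fin 3) (Fin 3) (AlgebraicClosure K)) *
          B.map (algebraMap K (AlgebraicClosure K)) *
          (P : Matrix (Fin 3) (Fin 3) (AlgebraicClosure K))).BlockTriangular id ∧
      (∀ i, (((P⁻¹ : GL (Fin 3) (AlgebraicClosure K)) : Matrix (Fin 3) (Fin 3) (AlgebraicClosure K)) *
          A.map (algebraMap K (AlgebraicClosure K)) *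
          (P : Matrix (Fin 3) (Fin 3) (AlgebraicClosure K))) i i
            = algebraMap K (AlgebraicClosure K) lam) ∧
      (∀ i, (((P⁻¹ : GL (Fin 3) (AlgebraicClosure K)) : Matrix (Fin 3) (Fin 3) (AlgebraicClosure K)) *
          B.map (algebraMap K (AlgebraicClosure K)) *
          (P : Matrix (Fin 3) (Fin 3) (AlgebraicClosure K))) i i
            = algebraMap K (AlgebraicClosure K) lam) := by
  -- characteristic facts
  have hb : ∀ n : ℕ, 0 < n → n < 4 → (n : K) ≠ 0 := by
    intro n hn hn4 hc
    have hdvd : ringChar K ∣ n := (ringChar.spec K n).mp hc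
    rcases hchar with h0 | hgt
    · rw [h0] at hdvd
      exact absurd (zero_dvd_iff.mp hdvd) (by omega)
    · have := Nat.le_of_dvd hn hdvd
      omega
  have h2 : (2:K) ≠ 0 := by have := hb 2 (by norm_num) (by norm_num); exact_mod_cast this
  have h3 : (3:K) ≠ 0 := by have := hb 3 (by norm_num) (by norm_num); exact_mod_cast this
  set C : Matrix (Fin 3) (Fin 3) K := A - B with hCdef
  have key : C ^ 2 = A * B - B * A := by
    have expand : (A - B) ^ 2 - (A * B - B * A) = A ^ 2 - 2 * (A * B) + B ^ 2 := by noncomm_ring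
    rw [h] at expand
    rw [hCdef]
    exact sub_eq_zero.mp expand
  have hCB : C * B - B * C = C ^ 2 := by
    rw [key, hCdef]; noncomm_ring
  have hC2ne : C ^ 2 ≠ 0 := by
    rw [key]; intro hz; exact hne (sub_eq_zero.mp hz)
  have hC3 : C ^ 3 = 0 := nilp3 h2 h3 C B hCB
  obtain ⟨P, hdet, hCP⟩ := reduce3 C hC3 hC2ne
  set N : Matrix (Fin 3) (Fin 3) K := !![0,1,0;0,0,1;0,0,0] with hNdef
  have hPP : P * P⁻¹ = 1 := Matrix.mul_nonsing_inv P hdet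
  have hPP' : P⁻¹ * P = 1 := Matrix.nonsing_inv_mul P hdet
  have hNconj : P⁻¹ * C * P = N := by rw [mul_assoc, hCP, ← mul_assoc, hPP', one_mul]
  have conj_mul : ∀ X Y : Matrix (Fin 3) (Fin 3) K,
      P⁻¹ * (X * Y) * P = (P⁻¹ * X * P) * (P⁻¹ * Y * P) := by
    intro X Y
    rw [show (P⁻¹ * X * P) * (P⁻¹ * Y * P) = P⁻¹ * X * (P * P⁻¹) * Y * P from by noncomm_ring,
      hPP]
    noncomm_ring
  set B' : Matrix (Fin 3) (Fin 3) K := P⁻¹ * B * P with hB'def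
  have hNB' : N * B' - B' * N = N * N := by
    rw [← hNconj, hB'def, ← conj_mul, ← conj_mul, ← conj_mul,
      show P⁻¹ * (C * B) * P - P⁻¹ * (B * C) * P = P⁻¹ * (C * B - B * C) * P from by
        noncomm_ring,
      hCB, pow_two]
  rw [hNdef] at hNB'
  obtain ⟨eB10, eB20, eB21, eB11, eB22⟩ := entries3 B' hNB'
  set A' : Matrix (Fin 3) (Fin 3) K := P⁻¹ * A * P with hA'def
  have hA'NB : A' = N + B' := by
    have hsplit : P⁻¹ * (C + B) * P = P⁻¹ * C * P + P⁻¹ * B * P := by noncomm_ring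
    rw [hA'def, show A = C + B from by rw [hCdef]; abel, hsplit, hNconj, hB'def]
  have htrA' : A'.trace = A.trace := by
    rw [hA'def, Matrix.trace_mul_cycle, hPP, one_mul]
  have htr : A.trace = 3 * B' 0 0 := by
    rw [← htrA', hA'NB]
    simp [Matrix.trace_fin_three, hNdef, eB11, eB22, Matrix.vecHead, Matrix.vecTail]
    ring
  set lam : K := 1/3 * A.trace with hlam
  have hB00 : B' 0 0 = lam := by
    rw [hlam, htr]
    field_simp
  -- pass to the algebraic closure
  set L := AlgebraicClosure K with hL
  set φ := algebraMap K L with hφ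
  have honemap : (1 : Matrix (Fin 3) (Fin 3) K).map φ = 1 :=
    Matrix.map_one φ (map_zero φ) (map_one φ)
  have pf1 : P.map φ * P⁻¹.map φ = 1 := by rw [← Matrix.map_mul, hPP, honemap]
  have pf2 : P⁻¹.map φ * P.map φ = 1 := by rw [← Matrix.map_mul, hPP', honemap]
  have hEA : (P⁻¹.map φ) * A.map φ * (P.map φ) = (N + B').map φ := by
    rw [← Matrix.map_mul, ← Matrix.map_mul, ← hA'def, hA'NB]
  have hEB : (P⁻¹.map φ) * B.map φ * (P.map φ) = B'.map φ := by
    rw [← Matrix.map_mul, ← Matrix.map_mul, ← hB'def]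
  have m10 : ((N + B').map φ) 1 0 = 0 := by
    simp [Matrix.map_apply, Matrix.add_apply, hNdef, eB10, Matrix.vecHead, Matrix.vecTail]
  have m20 : ((N + B').map φ) 2 0 = 0 := by
    simp [Matrix.map_apply, Matrix.add_apply, hNdef, eB20, Matrix.vecHead, Matrix.vecTail]
  have m21 : ((N + B').map φ) 2 1 = 0 := by
    simp [Matrix.map_apply, Matrix.add_apply, hNdef, eB21, Matrix.vecHead, Matrix.vecTail]
  have n10 : (B'.map φ) 1 0 = 0 := by simp [Matrix.map_apply, eB10]
  have n20 : (B'.map φ) 2 0 = 0 := by simp [Matrix.map_apply, eB20]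
  have n21 : (B'.map φ) 2 1 = 0 := by simp [Matrix.map_apply, eB21]
  refine ⟨⟨P.map φ, P⁻¹.map φ, pf1, pf2⟩, lam, rfl, ?_, ?_, ?_, ?_⟩
  · show ((P⁻¹.map φ) * A.map φ * (P.map φ)).BlockTriangular id
    rw [hEA]
    exact tri3 _ m10 m20 m21
  · show ((P⁻¹.map φ) * B.map φ * (P.map φ)).BlockTriangular id
    rw [hEB]
    exact tri3 _ n10 n20 n21
  · intro i
    show ((P⁻¹.map φ) * A.map φ * (P.map φ)) i i = φ lam
    rw [hEA]
    fin_cases i <;>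
      simp [Matrix.map_apply, Matrix.add_apply, hNdef, hB00, eB11, eB22,
        Matrix.vecHead, Matrix.vecTail]
  · intro i
    show ((P⁻¹.map φ) * B.map φ * (P.map φ)) i i = φ lam
    rw [hEB]
    fin_cases i <;>
      simp [Matrix.map_apply, hB00, eB11, eB22]
end

section
/- There exist nilpotent matrices $A, B \in M_4(\mathbb{Q})$ satisfying $A^3 - 3A^2B + 3AB^2 - B^3 = 0$ such that $AB - BA$ is invertible; concretely, one may take $B = J_4$ (the $4 \times 4$ nilpotent Jordan block) and $A$ the matrix with rows $(0, 4/3, -1/3, -1)$, $(1, 0, 3/4, -3/4)$, $(1, 0, 0, 0)$, $(1, 0, 0, 0)$. In particular $A$ and $B$ are not simultaneously triangularizable over $\overline{\mathbb{Q}}$. -/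
/-!
Over any nontrivial commutative ring, the commutator of two upper triangular matrices has zero
diagonal, hence is singular. Conjugating by `P` commutes with taking commutators and preserves
invertibility, so two matrices whose commutator is invertible can never be triangularized
simultaneously. For the explicit pair, nilpotency, the cubic relation and the invertibility of
`AB - BA` are finite computations over `ℚ`.
-/

open Matrix

theorem Units.conj_commutator {α : Type*} [Ring α] (u : αˣ) (a b : α) :
    ↑u⁻¹ * a * u * (↑u⁻¹ * b * u) - ↑u⁻¹ * b * u * (↑u⁻¹ * a * u) = ↑u⁻¹ * (a * b - b * a) * u := by
  simp only [mul_assoc, Units.mul_inv_cancel_left, mul_sub, sub_mul]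

namespace Matrix

variable {n R : Type*} [Fintype n] [LinearOrder n]

theorem IsUpperTriangular.mul_apply_self [NonUnitalNonAssocSemiring R] {M N : Matrix n n R}
    (hM : M.IsUpperTriangular) (hN : N.IsUpperTriangular) (i : n) :
    (M * N) i i = M i i * N i i := by
  rw [mul_apply]
  refine Finset.sum_eq_single i (fun k _ hk => ?_) (by simp)
  rcases hk.lt_or_gt with h | h
  · rw [hM h, zero_mul]
  · rw [hN h, mul_zero]

theorem IsUpperTriangular.det_commutator_eq_zero [Nonempty n] [CommRing R]
    {M N : Matrix n n R} (hM : M.IsUpperTriangular) (hN : N.IsUpperTriangular) :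
    (M * N - N * M).det = 0 := by
  rw [det_of_isUpperTriangular ((hM.mul hN).sub (hN.mul hM))]
  obtain ⟨i⟩ := ‹Nonempty n›
  refine Finset.prod_eq_zero (Finset.mem_univ i) ?_
  rw [sub_apply, hM.mul_apply_self hN, hN.mul_apply_self hM, mul_comm, sub_self]

theorem IsUpperTriangular.not_isUnit_commutator [Nonempty n] [CommRing R] [Nontrivial R]
    {M N : Matrix n n R} (hM : M.IsUpperTriangular) (hN : N.IsUpperTriangular) :
    ¬IsUnit (M * N - N * M) := by
  rw [isUnit_iff_isUnit_det, hM.det_commutator_eq_zero hN]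
  exact not_isUnit_zero

theorem not_exists_isUpperTriangular_conj_of_isUnit_commutator [Nonempty n] [CommRing R]
    [Nontrivial R] {A B : Matrix n n R} (h : IsUnit (A * B - B * A)) :
    ¬∃ P : GL n R, (((P⁻¹ : GL n R) : Matrix n n R) * A * P).IsUpperTriangular ∧
      (((P⁻¹ : GL n R) : Matrix n n R) * B * P).IsUpperTriangular := by
  rintro ⟨P, hA, hB⟩
  refine hA.not_isUnit_commutator hB ?_
  rw [Units.conj_commutator]
  exact (P⁻¹.isUnit.mul h).mul P.isUnit

end Matrix

def A₀ : Matrix (Fin 4) (Fin 4) ℚ :=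
  !![0, 4/3, -1/3, -1; 1, 0, 3/4, -3/4; 1, 0, 0, 0; 1, 0, 0, 0]

def J₄ : Matrix (Fin 4) (Fin 4) ℚ :=
  !![0, 1, 0, 0; 0, 0, 1, 0; 0, 0, 0, 1; 0, 0, 0, 0]

theorem A₀_pow_four : A₀ ^ 4 = 0 := by
  norm_num [A₀, pow_succ, cons_mul, vecMul_cons, ← Matrix.ext_iff, Fin.forall_fin_succ]

theorem J₄_pow_four : J₄ ^ 4 = 0 := by
  norm_num [J₄, pow_succ, cons_mul, vecMul_cons, ← Matrix.ext_iff, Fin.forall_fin_succ]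

theorem A₀_J₄_cubic : A₀ ^ 3 - 3 * (A₀ ^ 2 * J₄) + 3 * (A₀ * J₄ ^ 2) - J₄ ^ 3 = 0 := by
  simp only [← Nat.ofNat_nsmul_eq_mul]
  norm_num [A₀, J₄, pow_succ, cons_mul, vecMul_cons, ← Matrix.ext_iff, Fin.forall_fin_succ]

theorem isUnit_A₀_mul_J₄_sub_J₄_mul_A₀ : IsUnit (A₀ * J₄ - J₄ * A₀) := by
  refine (isUnit_iff_isUnit_det _).2 <| isUnit_det_of_right_inverse
    (B := !![0, 0, -1, 1; 0, 0, 0, 1; 12/7, -20/21, -16/21, 12/7; 0, 4/3, -4/3, 0]) ?_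
  norm_num [A₀, J₄, cons_mul, vecMul_cons, ← Matrix.ext_iff, Fin.forall_fin_succ, one_apply]
  decide

/-- There exist nilpotent `A, B ∈ M₄(ℚ)` with
`A³ - 3A²B + 3AB² - B³ = 0` and `AB - BA` invertible; one may take `B = J₄` and the
explicit matrix `A` below. In particular `A` and `B` are not simultaneously
triangularizable over the algebraic closure of `ℚ`. -/
theorem stmt5 :
    ∃ A B : Matrix (Fin 4) (Fin 4) ℚ,
      A = !![0, 4/3, -1/3, -1; 1, 0, 3/4, -3/4; 1, 0, 0, 0; 1, 0, 0, 0] ∧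
      B = !![0, 1, 0, 0; 0, 0, 1, 0; 0, 0, 0, 1; 0, 0, 0, 0] ∧
      IsNilpotent A ∧ IsNilpotent B ∧
      A ^ 3 - 3 * (A ^ 2 * B) + 3 * (A * B ^ 2) - B ^ 3 = 0 ∧
      IsUnit (A * B - B * A) ∧
      ¬ ∃ P : GL (Fin 4) (AlgebraicClosure ℚ),
        (((P⁻¹ : GL (Fin 4) (AlgebraicClosure ℚ)) : Matrix (Fin 4) (Fin 4) (AlgebraicClosure ℚ)) *
            A.map (algebraMap ℚ (AlgebraicClosure ℚ)) *
            (P : Matrix (Fin 4) (Fin 4) (AlgebraicClosure ℚ))).BlockTriangular id ∧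
        (((P⁻¹ : GL (Fin 4) (AlgebraicClosure ℚ)) : Matrix (Fin 4) (Fin 4) (AlgebraicClosure ℚ)) *
            B.map (algebraMap ℚ (AlgebraicClosure ℚ)) *
            (P : Matrix (Fin 4) (Fin 4) (AlgebraicClosure ℚ))).BlockTriangular id := by
  refine ⟨A₀, J₄, rfl, rfl, ⟨4, A₀_pow_four⟩, ⟨4, J₄_pow_four⟩, A₀_J₄_cubic,
    isUnit_A₀_mul_J₄_sub_J₄_mul_A₀, not_exists_isUpperTriangular_conj_of_isUnit_commutator ?_⟩
  simpa only [RingHom.mapMatrix_apply, map_sub, map_mul] using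
    isUnit_A₀_mul_J₄_sub_J₄_mul_A₀.map (algebraMap ℚ (AlgebraicClosure ℚ)).mapMatrix
end

section
/- Let $n, \alpha \geq 2$ and let $K$ be a field whose characteristic is $0$ or greater than $n$. If $A \in M_n(K)$ has $n$ distinct eigenvalues in the algebraic closure $\overline{K}$ (equivalently, its characteristic polynomial is separable), then $X = 0$ is the only matrix $X \in M_n(K)$ satisfying $AX - XA = X^{\alpha}$. -/
/-!
Extend scalars to the algebraic closure `L` and regard `A` and `X` as endomorphisms `a` and `x`
of `Lⁿ`.

`x` is nilpotent: otherwise take an eigenvalue `μ ≠ 0` of `x` with generalized eigenspace `W`.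
Since `[a, (x - μ)^(k+1)] = (k+1) (x - μ)^k xᵅ`, the space `W` is `a`-invariant, so the trace of
`xᵅ = [a, x]` on `W` vanishes. But `x = μ + (nilpotent)` on `W`, so this trace is
`dim W · μᵅ ≠ 0`, as `0 < dim W ≤ n` and `char K` is `0` or exceeds `n`.

If `x^(k+2) = 0`, then `[a, x^(k+1)] = (k+1) x^(k+α) = 0` because `α ≥ 2`. So `x^(k+1)` is
nilpotent and commutes with `a`; it preserves the generalized eigenspaces of `a`, which are at
most one-dimensional because the characteristic polynomial of `a` is separable, hence
`x^(k+1) = 0`. Descending on `k` gives `x = 0`.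
-/

open Module Module.End

section Ring

variable {R : Type*} [Ring R]

theorem mul_pow_succ_sub_pow_succ_mul {a y w : R} (h : a * y - y * a = w) (hw : Commute y w)
    (n : ℕ) : a * y ^ (n + 1) - y ^ (n + 1) * a = (n + 1) • (y ^ n * w) := by
  induction n with
  | zero => simpa using h
  | succ n ih =>
    calc a * y ^ (n + 2) - y ^ (n + 2) * a
        = (a * y ^ (n + 1) - y ^ (n + 1) * a) * y + y ^ (n + 1) * (a * y - y * a) := by
          simp only [pow_succ _ (n + 1)]; noncomm_ring
      _ = (n + 1 + 1) • (y ^ (n + 1) * w) := by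
          rw [ih, h, smul_mul_assoc, mul_assoc, ← hw.eq, ← mul_assoc, ← pow_succ, ← succ_nsmul]

theorem Commute.isNilpotent_pow_sub_pow {a b : R} (hab : Commute a b) (h : IsNilpotent (a - b))
    (n : ℕ) : IsNilpotent (a ^ n - b ^ n) := by
  rw [← hab.mul_geom_sum₂]
  refine Commute.isNilpotent_mul_right (Commute.sum_right _ _ _ fun i _ => ?_) h
  exact (((Commute.refl a).pow_right i).mul_right (hab.pow_right _)).sub_left
    ((hab.symm.pow_right i).mul_right ((Commute.refl b).pow_right _))

theorem eq_zero_of_mul_sub_mul_eq_pow {a y : R} {α : ℕ} (hα : 2 ≤ α)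
    (h : a * y - y * a = y ^ α) (hy : IsNilpotent y)
    (ha : ∀ z, Commute a z → IsNilpotent z → z = 0) : y = 0 := by
  have hpow : ∀ k, y ^ (k + 2) = 0 → y ^ (k + 1) = 0 := fun k hk => by
    refine ha _ (sub_eq_zero.mp ?_) (hy.pow_succ k)
    rw [mul_pow_succ_sub_pow_succ_mul h ((Commute.refl y).pow_right α) k, ← pow_add,
      pow_eq_zero_of_le (by omega) hk, smul_zero]
  have hdescent : ∀ m, y ^ (m + 1) = 0 → y = 0 := fun m => by
    induction m with
    | zero => simp
    | succ m ih => exact fun hm => ih (hpow m hm)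
  obtain ⟨m, hm⟩ := hy
  exact hdescent m (by rw [pow_succ, hm, zero_mul])

end Ring

namespace Module.End

theorem mapsTo_maxGenEigenspace_of_mul_sub_mul_eq {R M : Type*} [CommRing R] [AddCommGroup M]
    [Module R M] {f g w : End R M} (h : g * f - f * g = w) (hw : Commute f w) (μ : R) :
    Set.MapsTo g (f.maxGenEigenspace μ) (f.maxGenEigenspace μ) := fun x hx => by
  obtain ⟨k, hk⟩ := (f.mem_maxGenEigenspace μ x).mp hx
  set y := f - μ • (1 : End R M)
  have hy : g * y - y * g = w := by
    rw [← h]; simp only [y, mul_sub, sub_mul, mul_smul_comm, smul_mul_assoc, mul_one, one_mul]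
    abel
  have hyw : Commute y w := hw.sub_left ((Commute.one_left w).smul_left μ)
  have key := LinearMap.congr_fun (mul_pow_succ_sub_pow_succ_mul hy hyw k) x
  refine (f.mem_maxGenEigenspace μ (g x)).mpr ⟨k + 1, ?_⟩
  have hyx : (y ^ (k + 1)) x = 0 := by rw [pow_succ', mul_apply, hk, map_zero]
  have hywx : (y ^ k) (w x) = 0 := by
    rw [← mul_apply, (hyw.pow_left k).eq, mul_apply, hk, map_zero]
  rw [LinearMap.sub_apply, LinearMap.smul_apply, mul_apply, mul_apply, mul_apply, hyx, hywx,
    map_zero, smul_zero, zero_sub, neg_eq_zero] at key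
  exact key

variable {K V : Type*} [Field K] [AddCommGroup V] [Module K V] [FiniteDimensional K V]

theorem eq_zero_of_isNilpotent_of_finrank_le_one {φ : End K V} (hφ : IsNilpotent φ)
    (hV : finrank K V ≤ 1) : φ = 0 := by
  have hpow : φ ^ finrank K V = 0 := by
    simpa [hφ.charpoly_eq_X_pow_finrank] using φ.aeval_self_charpoly
  rcases Nat.le_one_iff_eq_zero_or_eq_one.mp hV with h0 | h1
  · have : Subsingleton V := finrank_zero_iff.mp h0
    exact Subsingleton.elim _ _
  · rwa [h1, pow_one] at hpow

theorem eq_zero_of_commute_of_isNilpotent [IsAlgClosed K] {g φ : End K V}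
    (hg : g.charpoly.Separable) (hc : Commute g φ) (hφ : IsNilpotent φ) : φ = 0 := by
  have hle : ∀ μ, g.maxGenEigenspace μ ≤ LinearMap.ker φ := fun μ x hx => by
    have hW := mapsTo_maxGenEigenspace_of_comm hc μ
    have hdim : finrank K (g.maxGenEigenspace μ) ≤ 1 := by
      rw [LinearMap.finrank_maxGenEigenspace_eq]
      exact Polynomial.rootMultiplicity_le_one_of_separable hg μ
    have h0 := eq_zero_of_isNilpotent_of_finrank_le_one (isNilpotent.restrict hW hφ) hdim
    exact congrArg Subtype.val (LinearMap.congr_fun h0 ⟨x, hx⟩)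
  rw [← LinearMap.ker_eq_top, eq_top_iff, ← iSup_maxGenEigenspace_eq_top g]
  exact iSup_le hle

theorem exists_maxGenEigenspace_ne_bot_of_not_isNilpotent [IsAlgClosed K] {f : End K V}
    (hf : ¬IsNilpotent f) : ∃ μ ≠ 0, f.maxGenEigenspace μ ≠ ⊥ := by
  by_contra! hbot
  apply hf
  have htop : f.maxGenEigenspace 0 = ⊤ := by
    refine eq_top_iff.mpr (iSup_maxGenEigenspace_eq_top f ▸ iSup_le fun μ => ?_)
    rcases eq_or_ne μ 0 with rfl | hμ
    · exact le_rfl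
    · simp [hbot μ hμ]
  refine ((LinearMap.charpoly_nilpotent_tfae f).out 0 2).mpr fun x => ?_
  simpa using (f.mem_maxGenEigenspace 0 x).mp (htop ▸ Submodule.mem_top)

theorem trace_pow_of_isNilpotent_sub_algebraMap {φ : End K V} {μ : K}
    (hφ : IsNilpotent (φ - algebraMap K (End K V) μ)) (k : ℕ) :
    LinearMap.trace K V (φ ^ k) = finrank K V * μ ^ k := by
  have hnil := Commute.isNilpotent_pow_sub_pow (Algebra.commutes μ φ).symm hφ k
  have := (LinearMap.isNilpotent_trace_of_isNilpotent hnil).eq_zero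
  rwa [map_sub, ← map_pow, Module.algebraMap_end_eq_smul_id, map_smul, LinearMap.trace_id,
    smul_eq_mul, mul_comm, sub_eq_zero] at this

theorem isNilpotent_of_mul_sub_mul_eq_pow [IsAlgClosed K] {f g : End K V} {α : ℕ}
    (hchar : ∀ m : ℕ, 0 < m → m ≤ finrank K V → (m : K) ≠ 0) (h : g * f - f * g = f ^ α) :
    IsNilpotent f := by
  by_contra hf
  obtain ⟨μ, hμ, hW⟩ := exists_maxGenEigenspace_ne_bot_of_not_isNilpotent hf
  set W := f.maxGenEigenspace μ
  have hfW : ∀ x ∈ W, f x ∈ W := mapsTo_maxGenEigenspace_of_comm (Commute.refl f) μ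
  have hgW : ∀ x ∈ W, g x ∈ W :=
    mapsTo_maxGenEigenspace_of_mul_sub_mul_eq h ((Commute.refl f).pow_right α) μ
  have hrestrict : g.restrict hgW * f.restrict hfW - f.restrict hfW * g.restrict hgW =
      f.restrict hfW ^ α := by
    ext x
    rw [pow_restrict]
    simp only [LinearMap.sub_apply, mul_apply, Submodule.coe_sub, LinearMap.coe_restrict_apply,
      ← h]
  have htrace : LinearMap.trace K W (f.restrict hfW ^ α) = 0 := by
    rw [← hrestrict, map_sub, LinearMap.trace_mul_comm, sub_self]
  have hnil : IsNilpotent (f.restrict hfW - algebraMap K (End K W) μ) := by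
    convert isNilpotent_restrict_maxGenEigenspace_sub_algebraMap f μ using 1
    ext
    rfl
  rw [trace_pow_of_isNilpotent_sub_algebraMap hnil] at htrace
  have hW0 : 0 < finrank K W := Submodule.one_le_finrank_iff.mpr hW
  exact mul_ne_zero (hchar _ hW0 (Submodule.finrank_le W)) (pow_ne_zero α hμ) htrace

end Module.End

theorem natCast_ne_zero_of_le_of_lt_ringChar {K : Type*} [Field K] {n m : ℕ}
    (hchar : ringChar K = 0 ∨ n < ringChar K) (hm : 0 < m) (hmn : m ≤ n) : (m : K) ≠ 0 := by
  rw [ne_eq, ringChar.spec]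
  rcases hchar with h0 | hlt
  · rw [h0, zero_dvd_iff]; omega
  · exact fun hdvd => absurd (Nat.le_of_dvd hm hdvd) (by omega)

theorem stmt7_general (n α : ℕ) (hα : 2 ≤ α) (K : Type*) [Field K]
    (hchar : ringChar K = 0 ∨ n < ringChar K)
    (A : Matrix (Fin n) (Fin n) K) (hsep : A.charpoly.Separable)
    (X : Matrix (Fin n) (Fin n) K) (h : A * X - X * A = X ^ α) :
    X = 0 := by
  let L := AlgebraicClosure K
  let F : Matrix (Fin n) (Fin n) K →+* End L (Fin n → L) :=
    (Matrix.toLinAlgEquiv' : Matrix (Fin n) (Fin n) L ≃ₐ[L] _).toRingHom.comp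
      (algebraMap K L).mapMatrix
  have hF : Function.Injective F :=
    Matrix.toLinAlgEquiv'.injective.comp (Matrix.map_injective (algebraMap K L).injective)
  have hrel : F A * F X - F X * F A = F X ^ α := by
    rw [← map_mul, ← map_mul, ← map_sub, h, map_pow]
  have hsepL : (F A).charpoly.Separable := by
    change (Matrix.toLin' (A.map (algebraMap K L))).charpoly.Separable
    rw [Matrix.charpoly_toLin', Matrix.charpoly_map]
    exact hsep.map
  have hcharL : ∀ m : ℕ, 0 < m → m ≤ finrank L (Fin n → L) → (m : L) ≠ 0 := fun m hm hmn => by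
    rw [← map_natCast (algebraMap K L), map_ne_zero]
    exact natCast_ne_zero_of_le_of_lt_ringChar hchar hm (by simpa using hmn)
  refine hF ((map_zero F).symm ▸ ?_)
  exact eq_zero_of_mul_sub_mul_eq_pow hα hrel (isNilpotent_of_mul_sub_mul_eq_pow hcharL hrel)
    fun z hz hzn => eq_zero_of_commute_of_isNilpotent hsepL hz hzn

/-- Let `n, α ≥ 2` and `K` a field of characteristic `0` or greater
than `n`. If `A ∈ Mₙ(K)` has `n` distinct eigenvalues in the algebraic closure, i.e. its
characteristic polynomial is separable, then `X = 0` is the only solution of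
`AX - XA = Xᵅ`. -/
theorem stmt7 (n α : ℕ) (hn : 2 ≤ n) (hα : 2 ≤ α) (K : Type*) [Field K]
    (hchar : ringChar K = 0 ∨ n < ringChar K)
    (A : Matrix (Fin n) (Fin n) K) (hsep : A.charpoly.Separable)
    (X : Matrix (Fin n) (Fin n) K) (h : A * X - X * A = X ^ α) :
    X = 0 :=
  stmt7_general n α hα K hchar A hsep X h
end

section
/- Let $n, \alpha \geq 2$ and let $R$ be a commutative ring with unity such that $n!$ is not a zero-divisor in $R$. Let $A \in M_n(R)$. If $X \in M_n(R)$ satisfies $AX - XA = X^{\alpha}$, then $X$ is a nilpotent matrix. -/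
/-!
The commutator with `A` acts on polynomial expressions in `X` as `f(X) ↦ (T^α f')(X)`, so the
ideal `I` of polynomials vanishing at `X` is stable under `f ↦ T^α f'`. Since
`T · (T^α (T^m g)') = m T^α (T^m g) + T^(m+α+1) g'`, each `T^m g ∈ I` yields some `T^m' g' ∈ I`.
Starting from the characteristic polynomial `p ∈ I` and differentiating `n` times gives
`T^m p⁽ⁿ⁾ ∈ I`; as `p` is monic of degree `n`, `p⁽ⁿ⁾ = n!`, so `n! X^m = 0` and hence `X^m = 0`.
-/

open Polynomial

namespace Polynomial

variable {R : Type*} [CommRing R]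

theorem Monic.iterate_derivative_natDegree {p : R[X]} (hp : p.Monic) :
    derivative^[p.natDegree] p = C (p.natDegree.factorial : R) := by
  rw [eq_C_of_natDegree_eq_zero (p := derivative^[_] p)
      (by simpa using natDegree_iterate_derivative p p.natDegree),
    coeff_iterate_derivative, zero_add, Nat.descFactorial_self, hp.coeff_natDegree, nsmul_one]

theorem X_mul_derivative_X_pow (m : ℕ) : X * derivative (X ^ m : R[X]) = C (m : R) * X ^ m := by
  cases m with
  | zero => simp
  | succ m => rw [derivative_X_pow, Nat.add_sub_cancel]; ring

theorem X_pow_mul_derivative_mem_of_X_pow_mul_mem {I : Ideal R[X]} {α : ℕ}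
    (hI : ∀ f ∈ I, X ^ α * derivative f ∈ I) {m : ℕ} {g : R[X]} (hg : X ^ m * g ∈ I) :
    X ^ (m + α + 1) * derivative g ∈ I := by
  convert I.sub_mem (I.mul_mem_left X (hI _ hg)) (I.mul_mem_left (C (m : R) * X ^ α) hg) using 1
  rw [derivative_mul]
  linear_combination (-(X ^ α * g)) * X_mul_derivative_X_pow (R := R) m

theorem exists_X_pow_mul_iterate_derivative_mem {I : Ideal R[X]} {α : ℕ}
    (hI : ∀ f ∈ I, X ^ α * derivative f ∈ I) {p : R[X]} (hp : p ∈ I) (j : ℕ) :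
    ∃ m, X ^ m * derivative^[j] p ∈ I := by
  induction j with
  | zero => exact ⟨0, by simpa using hp⟩
  | succ j ih =>
    obtain ⟨m, hm⟩ := ih
    exact ⟨_, by simpa only [Function.iterate_succ_apply'] using
      X_pow_mul_derivative_mem_of_X_pow_mul_mem hI hm⟩

end Polynomial

theorem mul_aeval_sub_aeval_mul_eq_aeval_mul_derivative {R S : Type*} [CommRing R] [Ring S]
    [Algebra R S] {a x : S} {q : R[X]} (h : a * x - x * a = aeval x q) (f : R[X]) :
    a * aeval x f - aeval x f * a = aeval x (q * derivative f) := by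
  induction f using Polynomial.induction_on with
  | C r => simp [Algebra.commutes]
  | add f g hf hg => simp only [map_add, mul_add, add_mul, ← hf, ← hg]; abel
  | monomial k r ih =>
    rw [show C r * X ^ (k + 1) = C r * X ^ k * X by ring]
    generalize C r * X ^ k = g at ih ⊢
    rw [derivative_mul, derivative_X, map_mul, aeval_X]
    calc a * (aeval x g * x) - aeval x g * x * a
        = (a * aeval x g - aeval x g * a) * x + aeval x g * (a * x - x * a) := by noncomm_ring
      _ = aeval x (q * derivative g * X + g * q) := by
        rw [ih, h]; simp only [map_add, map_mul (aeval x), aeval_X]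
      _ = _ := by congr 1; ring

theorem Matrix.iterate_derivative_charpoly {R n : Type*} [CommRing R] [Fintype n] [DecidableEq n]
    (M : Matrix n n R) :
    derivative^[Fintype.card n] M.charpoly = C ((Fintype.card n).factorial : R) := by
  nontriviality R
  simpa using M.charpoly_monic.iterate_derivative_natDegree

theorem stmt9_general (n α : ℕ)
    (R : Type*) [CommRing R]
    (hfac : (n.factorial : R) ∈ nonZeroDivisors R)
    (A X : Matrix (Fin n) (Fin n) R)
    (h : A * X - X * A = X ^ α) :
    IsNilpotent X := by
  let I := RingHom.ker (aeval (R := R) X)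
  have hI : ∀ f ∈ I, Polynomial.X ^ α * derivative f ∈ I := fun f hf => by
    rw [RingHom.mem_ker] at hf ⊢
    rw [← mul_aeval_sub_aeval_mul_eq_aeval_mul_derivative (by simpa using h), hf, mul_zero,
      zero_mul, sub_zero]
  obtain ⟨m, hm⟩ := exists_X_pow_mul_iterate_derivative_mem hI (Matrix.aeval_self_charpoly X) n
  have hder : derivative^[n] X.charpoly = C (n.factorial : R) := by
    simpa using X.iterate_derivative_charpoly
  rw [RingHom.mem_ker, hder, map_mul, map_pow, aeval_X, aeval_C, ← Algebra.commutes,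
    ← Algebra.smul_def] at hm
  have hreg := (isRegular_iff_mem_nonZeroDivisors.mpr hfac).left.matrix (m := Fin n) (n := Fin n)
  exact ⟨m, hreg (hm.trans (smul_zero _).symm)⟩

/-- Let `n, α ≥ 2` and `R` a commutative ring in which `n!` is not a
zero-divisor. If `A, X ∈ Mₙ(R)` satisfy `AX - XA = Xᵅ`, then `X` is nilpotent. -/
theorem stmt9 (n α : ℕ) (hn : 2 ≤ n) (hα : 2 ≤ α)
    (R : Type*) [CommRing R]
    (hfac : (n.factorial : R) ∈ nonZeroDivisors R)
    (A X : Matrix (Fin n) (Fin n) R)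
    (h : A * X - X * A = X ^ α) :
    IsNilpotent X :=
  stmt9_general n α R hfac A X h
end

section
/- Let $\alpha \in \{2, 3, 4\}$ and let $R$ be a commutative ring with unity such that $2$ (if $\alpha = 2$), $3!$ (if $\alpha = 3$), or $5!$ (if $\alpha = 4$) is not a zero-divisor in $R$. Let $\tilde{R} = R[a_{1,1}, a_{1,2}, a_{2,1}, a_{2,2}]$ and let $A = [a_{i,j}] \in M_2(\tilde{R})$ be the generic $2 \times 2$ matrix. If $X = [x_{i,j}] \in M_2(\tilde{R})$ satisfies $AX - XA = X^{\alpha}$, then $AX - XA = 0$, $X^{\alpha} = 0$, and for every pair $(i,j)$ one has $x_{i,j}^{2\alpha - 1} = 0$. -/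
/-!
Write `D = ⁅A, ·⁆` and `K = disc A`. For every `2 × 2` matrix `D³ = K • D`, and for the generic
matrix `K` is a non-zero-divisor.

If `D X = X ^ α`, then `tr (X ^ α)` and `tr (X ^ (2α))` are traces of `Y * D X` with `Y` commuting
with `X`, so they vanish, and Cayley–Hamilton (with `2` regular) gives `X ^ (2α) = 0`. Since `D X`
commutes with `X`, `D³ X = α (2α - 1) X ^ (3α - 2) = 0`; hence `K • X ^ α = 0` and `X ^ α = 0`.

Now `X` commutes with `A`. With `B = A - adj A` (so `B² = K`), `B (X - adj X)` is a scalar `s` and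
`2K • X = (K tr X) • 1 + s • B`, so `2K xᵢⱼ • 1 = c X + d adj X` with `c, d` polynomials in `B`.
As `X` and `adj X` commute and have vanishing `α`-th powers, `(2K xᵢⱼ) ^ (2α - 1) = 0`.
-/

open Matrix MvPolynomial
open scoped nonZeroDivisors

attribute [local instance] LieRing.ofAssociativeRing

section Ring

variable {M : Type*} [Ring M]

theorem lie_pow_succ_of_commute {a x : M} (h : Commute x ⁅a, x⁆) (n : ℕ) :
    ⁅a, x ^ (n + 1)⁆ = (n + 1) • (x ^ n * ⁅a, x⁆) := by
  induction n with
  | zero => simp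
  | succ n ih =>
    have hmul : ⁅a, x ^ (n + 1) * x⁆ = ⁅a, x ^ (n + 1)⁆ * x + x ^ (n + 1) * ⁅a, x⁆ := by
      simp only [Ring.lie_def]; noncomm_ring
    have hshift : x ^ n * ⁅a, x⁆ * x = x ^ (n + 1) * ⁅a, x⁆ := by
      rw [mul_assoc, ← h.eq, ← mul_assoc, ← pow_succ]
    rw [pow_succ x (n + 1), hmul, ih, smul_mul_assoc, hshift, succ_nsmul _ (n + 1)]

theorem Commute.mul_add_mul_pow_eq_zero {p q c d : M} (hpq : Commute p q) (hcd : Commute c d)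
    (hcp : Commute c p) (hcq : Commute c q) (hdp : Commute d p) (hdq : Commute d q) {n : ℕ}
    (hp : p ^ n = 0) (hq : q ^ n = 0) : (c * p + d * q) ^ (2 * n - 1) = 0 := by
  rcases n.eq_zero_or_pos with rfl | hn
  · have : Subsingleton M := subsingleton_of_zero_eq_one (by simpa using hp.symm)
    exact Subsingleton.elim _ _
  refine Commute.add_pow_eq_zero_of_add_le_succ_of_pow_eq_zero
    ((hcd.mul_right hcq).mul_left (hdp.symm.mul_right hpq)) (m := n) (n := n) ?_ ?_ (by omega)
  · rw [hcp.mul_pow, hp, mul_zero]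
  · rw [hdq.mul_pow, hq, mul_zero]

end Ring

namespace Matrix

variable {S : Type*} [CommRing S]

theorem trace_mul_lie_eq_zero_of_commute {n : Type*} [Fintype n] {A X Y : Matrix n n S}
    (h : Commute X Y) : (Y * ⁅A, X⁆).trace = 0 := by
  rw [Ring.lie_def, mul_sub, trace_sub, sub_eq_zero, ← mul_assoc, trace_mul_cycle, h.eq, mul_assoc]

theorem eq_zero_of_smul_eq_zero {m n : Type*} {r : S} (hr : r ∈ S⁰) {Y : Matrix m n S}
    (h : r • Y = 0) : Y = 0 := by
  ext i j
  exact (mul_left_mem_nonZeroDivisors_eq_zero_iff hr).mp (congrFun (congrFun h i) j)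

variable (A Y : Matrix (Fin 2) (Fin 2) S)

theorem add_adjugate_eq_trace_smul_fin_two : Y + adjugate Y = Y.trace • 1 := by
  ext i j
  fin_cases i <;> fin_cases j <;> simp [adjugate_fin_two, trace_fin_two, add_comm]

theorem sub_adjugate_sq_eq_discr_smul_fin_two : (A - adjugate A) ^ 2 = A.discr • 1 := by
  rw [discr_fin_two]
  ext i j
  fin_cases i <;> fin_cases j <;>
    simp only [Fin.zero_eta, Fin.mk_one, sq, adjugate_fin_two, trace_fin_two, det_fin_two,
      mul_apply, Fin.sum_univ_two, sub_apply, of_apply, cons_val', cons_val_fin_one, cons_val_zero,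
      cons_val_one, smul_apply, smul_eq_mul, one_apply_eq, one_apply_ne, ne_eq, zero_ne_one,
      one_ne_zero, not_false_eq_true, mul_one, mul_zero] <;>
    ring

theorem lie_lie_lie_eq_discr_smul_fin_two : ⁅A, ⁅A, ⁅A, Y⁆⁆⁆ = A.discr • ⁅A, Y⁆ := by
  rw [discr_fin_two]
  ext i j
  fin_cases i <;> fin_cases j <;>
    simp only [Fin.zero_eta, Fin.mk_one, Ring.lie_def, mul_apply, Fin.sum_univ_two, trace_fin_two,
      det_fin_two, sub_apply, smul_apply, smul_eq_mul] <;>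
    ring

variable {A Y}

theorem commute_adjugate_fin_two (h : Commute A Y) : Commute (adjugate A) Y := by
  rw [eq_sub_of_add_eq' (add_adjugate_eq_trace_smul_fin_two A)]
  exact ((Commute.one_left Y).smul_left _).sub_left h

theorem sq_eq_zero_of_trace_eq_zero_of_trace_sq_eq_zero_fin_two (h2 : (2 : S) ∈ S⁰)
    (h1 : Y.trace = 0) (hsq : (Y ^ 2).trace = 0) : Y ^ 2 = 0 := by
  rw [trace_fin_two] at h1
  rw [sq, trace_fin_two, mul_apply, mul_apply] at hsq
  simp only [Fin.sum_univ_two] at hsq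
  have hdet : Y 0 0 * Y 0 0 + Y 0 1 * Y 1 0 = 0 :=
    (mul_right_mem_nonZeroDivisors_eq_zero_iff h2).mp
      (by linear_combination hsq + (Y 0 0 - Y 1 1) * h1)
  ext i j
  fin_cases i <;> fin_cases j <;>
    simp only [Fin.zero_eta, Fin.mk_one, sq, mul_apply, Fin.sum_univ_two, zero_apply]
  · linear_combination hdet
  · linear_combination Y 0 1 * h1
  · linear_combination Y 1 0 * h1
  · linear_combination hdet + (Y 1 1 - Y 0 0) * h1

theorem exists_sub_adjugate_mul_sub_adjugate_eq_smul_one (h : Commute A Y) :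
    ∃ s : S, (A - adjugate A) * (Y - adjugate Y) = s • 1 := by
  have h00 := congrFun (congrFun h.eq 0) 0
  have h01 := congrFun (congrFun h.eq 0) 1
  have h10 := congrFun (congrFun h.eq 1) 0
  simp only [mul_apply, Fin.sum_univ_two] at h00 h01 h10
  refine ⟨((A - adjugate A) * (Y - adjugate Y)) 0 0, ?_⟩
  ext i j
  fin_cases i <;> fin_cases j <;>
    simp only [Fin.zero_eta, Fin.mk_one, adjugate_fin_two, mul_apply, Fin.sum_univ_two, sub_apply,
      of_apply, cons_val', cons_val_fin_one, cons_val_zero, cons_val_one, smul_apply, smul_eq_mul,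
      one_apply_eq, one_apply_ne, ne_eq, zero_ne_one, one_ne_zero, not_false_eq_true, mul_one,
      mul_zero]
  · linear_combination 2 * h01
  · linear_combination 2 * h10
  · linear_combination -4 * h00

variable {X : Matrix (Fin 2) (Fin 2) S}

theorem pow_eq_zero_of_lie_eq_pow (h2 : (2 : S) ∈ S⁰) (hA : A.discr ∈ S⁰) {n : ℕ} (hn : 2 ≤ n)
    (h : ⁅A, X⁆ = X ^ n) : X ^ n = 0 := by
  have hcomm : Commute X ⁅A, X⁆ := h ▸ Commute.self_pow X n
  have hnil : X ^ (2 * n) = 0 := by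
    have htr : (X ^ n).trace = 0 := by
      simpa [h] using trace_mul_lie_eq_zero_of_commute (A := A) (Commute.one_right X)
    have htr_sq : ((X ^ n) ^ 2).trace = 0 := by
      simpa [sq, ← h] using trace_mul_lie_eq_zero_of_commute (A := A) (Commute.self_pow X n)
    rw [mul_comm, pow_mul]
    exact sq_eq_zero_of_trace_eq_zero_of_trace_sq_eq_zero_fin_two h2 htr htr_sq
  obtain ⟨m, rfl⟩ : ∃ m, n = m + 1 := ⟨n - 1, by omega⟩
  have hcube : ⁅A, ⁅A, ⁅A, X⁆⁆⁆ = 0 := by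
    rw [h, lie_pow_succ_of_commute hcomm, h, ← pow_add, lie_nsmul,
      show m + (m + 1) = 2 * m + 1 by ring, lie_pow_succ_of_commute hcomm, h, ← pow_add,
      pow_eq_zero_of_le (by omega) hnil, smul_zero, smul_zero]
  refine eq_zero_of_smul_eq_zero hA ?_
  rw [← h, ← lie_lie_lie_eq_discr_smul_fin_two, hcube]

theorem entry_smul_one_eq_mul_add_mul_adjugate (hAX : Commute A X) (i j : Fin 2) :
    (2 * A.discr * X i j) • (1 : Matrix (Fin 2) (Fin 2) S) =
      ((A.discr * (1 : Matrix (Fin 2) (Fin 2) S) i j) • 1 +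
          (A - adjugate A) i j • (A - adjugate A)) * X +
        ((A.discr * (1 : Matrix (Fin 2) (Fin 2) S) i j) • 1 +
          (-(A - adjugate A) i j) • (A - adjugate A)) * adjugate X := by
  obtain ⟨s, hs⟩ := exists_sub_adjugate_mul_sub_adjugate_eq_smul_one hAX
  set B := A - adjugate A
  set c := A.discr * (1 : Matrix (Fin 2) (Fin 2) S) i j
  have hKX : (2 * A.discr) • X = (A.discr * X.trace) • 1 + s • B := by
    have hKN : A.discr • (X - adjugate X) = s • B := by
      rw [← smul_one_mul, ← sub_adjugate_sq_eq_discr_smul_fin_two, sq, mul_assoc, hs, mul_smul_one]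
    rw [mul_smul A.discr, ← add_adjugate_eq_trace_smul_fin_two, ← hKN]
    module
  have hentry : 2 * A.discr * X i j = c * X.trace + B i j * s := by
    simpa [c, mul_right_comm _ X.trace, mul_comm s] using congrFun (congrFun hKX i) j
  rw [hentry, add_smul, mul_smul c, mul_smul (B i j), ← add_adjugate_eq_trace_smul_fin_two, ← hs]
  simp only [add_mul, neg_smul, neg_mul, smul_mul_assoc, one_mul, mul_sub, smul_add, smul_sub]
  abel

theorem entry_pow_eq_zero_of_commute (h2 : (2 : S) ∈ S⁰) (hA : A.discr ∈ S⁰) (hAX : Commute A X)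
    {n : ℕ} (hX : X ^ n = 0) (i j : Fin 2) : X i j ^ (2 * n - 1) = 0 := by
  set B := A - adjugate A
  set Q := adjugate X
  have hXQ : Commute X Q := (mul_adjugate X).trans (adjugate_mul X).symm
  have hAQ : Commute A Q := (commute_adjugate_fin_two hAX.symm).symm
  have hBX : Commute B X := hAX.sub_left (commute_adjugate_fin_two hAX)
  have hBQ : Commute B Q := hAQ.sub_left (commute_adjugate_fin_two hAQ)
  set c := A.discr * (1 : Matrix (Fin 2) (Fin 2) S) i j
  have hpoly : ∀ {Y} (β : S), Commute B Y → Commute (c • 1 + β • B) Y := fun β hY =>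
    ((Commute.one_left _).smul_left c).add_left (hY.smul_left β)
  have hQ : Q ^ n = 0 := by rw [← adjugate_pow, hX, adjugate_zero]
  have hpow := Commute.mul_add_mul_pow_eq_zero hXQ
    (hpoly (B i j) (hpoly (-B i j) (Commute.refl B)).symm) (hpoly _ hBX) (hpoly _ hBQ)
    (hpoly (-B i j) hBX) (hpoly _ hBQ) hX hQ
  rw [← entry_smul_one_eq_mul_add_mul_adjugate hAX, smul_pow, one_pow] at hpow
  have hscalar : (2 * A.discr) ^ (2 * n - 1) * X i j ^ (2 * n - 1) = 0 := by
    simpa [mul_pow] using congrFun (congrFun hpow 0) 0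
  exact (mul_left_mem_nonZeroDivisors_eq_zero_iff (pow_mem (mul_mem h2 hA) _)).mp hscalar

end Matrix

namespace MvPolynomial

variable {σ R : Type*} [CommRing R]

theorem C_mem_nonZeroDivisors {r : R} (hr : r ∈ R⁰) :
    (C r : MvPolynomial σ R) ∈ (MvPolynomial σ R)⁰ := by
  rw [mem_nonZeroDivisors_iff_right]
  intro f hf
  ext m
  rw [coeff_zero, ← mul_left_mem_nonZeroDivisors_eq_zero_iff hr, ← coeff_C_mul, mul_comm, hf,
    coeff_zero]

theorem discr_mem_nonZeroDivisors_of_generic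
    {A : Matrix (Fin 2) (Fin 2) (MvPolynomial (Fin 2 × Fin 2) R)} (hA : ∀ i j, A i j = X (i, j)) :
    A.discr ∈ (MvPolynomial (Fin 2 × Fin 2) R)⁰ := by
  -- as a polynomial in `X (0, 0)` over the other three variables, the discriminant is monic
  let e := (renameEquiv R (Equiv.optionSubtypeNe ((0, 0) : Fin 2 × Fin 2)).symm).trans
    (optionEquivLeft R {j // j ≠ (0, 0)})
  refine mem_nonZeroDivisors_of_injective (f := e) e.injective ?_
  rw [discr_fin_two, trace_fin_two, det_fin_two]
  simp only [e, hA, AlgEquiv.trans_apply, renameEquiv_apply, map_add, map_sub, map_mul, map_pow,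
    map_ofNat, rename_X, Equiv.optionSubtypeNe_symm_apply, ne_eq, Prod.mk.injEq, one_ne_zero,
    and_self, and_false, and_true, dite_false, dite_true, optionEquivLeft_X_none,
    optionEquivLeft_X_some]
  exact Polynomial.Monic.mem_nonZeroDivisors (by monicity!)

end MvPolynomial

/-- Let `α ∈ {2, 3, 4}` and `R` a commutative ring such that `2`
(if `α = 2`), `3!` (if `α = 3`), or `5!` (if `α = 4`) is not a zero-divisor. If `A` is
the generic `2 × 2` matrix over `R` and `X` (over `R̃ = R[a₁₁, a₁₂, a₂₁, a₂₂]`) satisfies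
`AX - XA = Xᵅ`, then `AX - XA = Xᵅ = 0` and each entry `xᵢⱼ` of `X` satisfies
`xᵢⱼ^(2α - 1) = 0`. -/
theorem stmt10 (α : ℕ) (hα : α = 2 ∨ α = 3 ∨ α = 4)
    (R : Type*) [CommRing R]
    (h2 : α = 2 → (2 : R) ∈ nonZeroDivisors R)
    (h3 : α = 3 → ((Nat.factorial 3 : ℕ) : R) ∈ nonZeroDivisors R)
    (h4 : α = 4 → ((Nat.factorial 5 : ℕ) : R) ∈ nonZeroDivisors R)
    (A : Matrix (Fin 2) (Fin 2) (MvPolynomial (Fin 2 × Fin 2) R))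
    (hA : ∀ i j, A i j = MvPolynomial.X (i, j))
    (X : Matrix (Fin 2) (Fin 2) (MvPolynomial (Fin 2 × Fin 2) R))
    (h : A * X - X * A = X ^ α) :
    A * X - X * A = 0 ∧ X ^ α = 0 ∧ ∀ i j, (X i j) ^ (2 * α - 1) = 0 := by
  have h2R : (2 : R) ∈ R⁰ := by
    rcases hα with rfl | rfl | rfl
    · exact h2 rfl
    · have h6 := h3 rfl
      rw [show ((Nat.factorial 3 : ℕ) : R) = 2 * 3 by norm_num [Nat.factorial]] at h6
      exact (mul_mem_nonZeroDivisors.mp h6).1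
    · have h120 := h4 rfl
      rw [show ((Nat.factorial 5 : ℕ) : R) = 2 * 60 by norm_num [Nat.factorial]] at h120
      exact (mul_mem_nonZeroDivisors.mp h120).1
  have h2S : (2 : MvPolynomial (Fin 2 × Fin 2) R) ∈ (MvPolynomial (Fin 2 × Fin 2) R)⁰ := by
    simpa only [map_ofNat] using C_mem_nonZeroDivisors (σ := Fin 2 × Fin 2) h2R
  have hK := discr_mem_nonZeroDivisors_of_generic hA
  have hXα : X ^ α = 0 := pow_eq_zero_of_lie_eq_pow h2S hK (by omega) (by rw [Ring.lie_def, h])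
  have hAX : A * X - X * A = 0 := h.trans hXα
  exact ⟨hAX, hXα, entry_pow_eq_zero_of_commute h2S hK (sub_eq_zero.mp hAX) hXα⟩
end

section
/- Let $R$ be a commutative ring with unity, $\alpha \geq 2$, and $g$ a polynomial with coefficients in $R$ with $g(0) \neq 0$. Let $A \in M_n(R)$ be similar over $R$ to the block diagonal matrix $\mathrm{diag}(\lambda_1 I_{n_1}, \dots, \lambda_r I_{n_r})$ with $n_1 + \dots + n_r = n$, where for every $i \neq j$ the element $\lambda_i - \lambda_j$ is not a zero-divisor in $R$. If $X \in M_n(R)$ is a nilpotent matrix satisfying $XA - AX = X^{\alpha} g(X)$, then there exists $P \in GL_n(R)$ such that $A = P \, \mathrm{diag}(\lambda_1 I_{n_1}, \dots, \lambda_r I_{n_r}) \, P^{-1}$ and $X = P \, \mathrm{diag}(X_1, \dots, X_r) \, P^{-1}$, where $X_i \in M_{n_i}(R)$ and $X_i^{\alpha} g(X_i) = 0$ for every $i$. In particular $AX = XA$. -/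
/-!
Conjugating by `Q` reduces to `A = D = diag(λ_p)`, on which `δ = (· * D - D * ·)` acts
entrywise by `δ(M)_{pq} = M_{pq} (λ_q - λ_p)`. Since `δ(Y) = q(Y)` with `X^α ∣ q` commutes
with `Y`, `δ` acts on polynomials in `Y` by `δ(p(Y)) = p'(Y) q(Y)`; each application thus
raises the `X`-adic order by `α - 1 ≥ 1`, and `δ^N(Y) = 0` once `N` reaches the nilpotency
index of `Y`.
As the `λ_q - λ_p` between different blocks are non-zero-divisors, `Y_{pq} (λ_q - λ_p)^N = 0`
kills the off-block entries: `Y` is block diagonal, commutes with `D`, and `Y^α g(Y) = δ(Y) = 0`.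
-/

open Polynomial Matrix

section Commutator

variable {R A : Type*} [CommRing R] [Ring A] [Algebra R A] {D Y : A}

theorem aeval_mul_sub_mul_aeval_s13 (hc : Commute Y (Y * D - D * Y)) (p : R[X]) :
    aeval Y p * D - D * aeval Y p = aeval Y (derivative p) * (Y * D - D * Y) := by
  induction p using Polynomial.induction_on with
  | C a => simp [Algebra.commutes]
  | add p q hp hq =>
    simp only [map_add, add_mul, ← hp, ← hq]
    noncomm_ring
  | monomial n a ih =>
    rw [pow_succ, ← mul_assoc, derivative_mul, derivative_X, mul_one, map_add,
      map_mul (aeval Y) _ X, map_mul (aeval Y) _ X, aeval_X]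
    set P := aeval Y (C a * X ^ n)
    set P' := aeval Y (derivative (C a * X ^ n))
    calc P * Y * D - D * (P * Y) = P * (Y * D - D * Y) + (P * D - D * P) * Y := by noncomm_ring
      _ = (P' * Y + P) * (Y * D - D * Y) := by rw [ih, mul_assoc, ← hc.eq]; noncomm_ring

theorem exists_iterate_mul_sub_mul_eq_aeval {q : R[X]} {k : ℕ} (hq : X ^ (k + 1) ∣ q)
    (hY : Y * D - D * Y = aeval Y q) (N : ℕ) :
    ∃ p : R[X], X ^ (N * k + 1) ∣ p ∧ (fun M => M * D - D * M)^[N] Y = aeval Y p := by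
  have hc : Commute Y (Y * D - D * Y) := by
    simpa [hY] using (Commute.all X q).map (aeval Y)
  induction N with
  | zero => exact ⟨X, by simp, by simp⟩
  | succ N ih =>
    obtain ⟨p, hp, hNY⟩ := ih
    refine ⟨derivative p * q, ?_, ?_⟩
    · have := mul_dvd_mul (pow_sub_one_dvd_derivative_of_pow_dvd hp) hq
      rwa [← pow_add, Nat.add_sub_cancel, ← add_assoc, ← Nat.succ_mul] at this
    · rw [Function.iterate_succ_apply', hNY, aeval_mul_sub_mul_aeval_s13 hc, hY, map_mul]

theorem exists_iterate_mul_sub_mul_eq_zero {q : R[X]} {k : ℕ} (hk : 1 ≤ k)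
    (hq : X ^ (k + 1) ∣ q) (hY : Y * D - D * Y = aeval Y q) (hnil : IsNilpotent Y) :
    ∃ N, (fun M => M * D - D * M)^[N] Y = 0 := by
  obtain ⟨m, hm⟩ := hnil
  obtain ⟨p, hp, hmY⟩ := exists_iterate_mul_sub_mul_eq_aeval hq hY m
  obtain ⟨s, rfl⟩ := (pow_dvd_pow (X : R[X]) (by nlinarith : m ≤ m * k + 1)).trans hp
  exact ⟨m, by rw [hmY, map_mul, map_pow, aeval_X, hm, zero_mul]⟩

end Commutator

namespace Matrix

variable {n R : Type*} [Fintype n] [DecidableEq n] [CommRing R]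

theorem iterate_mul_diagonal_sub_diagonal_mul_apply (f : n → R) (M : Matrix n n R) (N : ℕ)
    (p q : n) :
    ((fun M => M * diagonal f - diagonal f * M)^[N] M) p q = M p q * (f q - f p) ^ N := by
  induction N generalizing M with
  | zero => simp
  | succ N ih =>
    rw [Function.iterate_succ_apply, ih, sub_apply, mul_diagonal, diagonal_mul, pow_succ]
    ring

theorem apply_eq_zero_of_iterate_mul_diagonal_sub_diagonal_mul_eq_zero {f : n → R}
    {M : Matrix n n R} {N : ℕ} (hM : (fun M => M * diagonal f - diagonal f * M)^[N] M = 0)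
    {p q : n} (hpq : f q - f p ∈ nonZeroDivisors R) : M p q = 0 := by
  have := iterate_mul_diagonal_sub_diagonal_mul_apply f M N p q
  rw [hM, zero_apply, eq_comm] at this
  exact (mul_right_mem_nonZeroDivisors_eq_zero_iff (pow_mem hpq N)).mp this

theorem commute_diagonal_of_apply_eq_zero {f : n → R} {M : Matrix n n R}
    (hM : ∀ p q, f p ≠ f q → M p q = 0) : Commute M (diagonal f) := by
  ext p q
  rw [mul_diagonal, diagonal_mul]
  by_cases hpq : f p = f q
  · rw [hpq, mul_comm]
  · rw [hM p q hpq, zero_mul, mul_zero]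

variable {o : Type*} {m' : o → Type*} [DecidableEq o]

theorem eq_blockDiagonal'_blockDiag' {M : Matrix (Σ i, m' i) (Σ i, m' i) R}
    (hM : ∀ p q : Σ i, m' i, p.1 ≠ q.1 → M p q = 0) : M = blockDiagonal' (blockDiag' M) := by
  ext ⟨i, a⟩ ⟨j, b⟩
  rcases eq_or_ne i j with rfl | hij
  · rw [blockDiagonal'_apply_eq, blockDiag'_apply]
  · rw [blockDiagonal'_apply_ne _ _ _ hij, hM _ _ hij]

variable (R m') [Fintype o] [∀ i, Fintype (m' i)] [∀ i, DecidableEq (m' i)]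

def blockDiagonal'AlgHom :
    (∀ i, Matrix (m' i) (m' i) R) →ₐ[R] Matrix (Σ i, m' i) (Σ i, m' i) R :=
  { blockDiagonal'RingHom m' R with
    commutes' := fun r => by simp [Algebra.algebraMap_eq_smul_one] }

variable {R m'}

theorem aeval_blockDiagonal' (M : ∀ i, Matrix (m' i) (m' i) R) (p : R[X]) :
    aeval (blockDiagonal' M) p = blockDiagonal' fun i => aeval (M i) p := by
  rw [← aeval_pi_apply]
  exact aeval_algHom_apply (blockDiagonal'AlgHom R m') M p

end Matrix

theorem stmt13_general (R : Type*) [CommRing R] (α : ℕ) (hα : 2 ≤ α)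
    (g : Polynomial R)
    (r : ℕ) (d : Fin r → ℕ)
    (lam : Fin r → R)
    (hreg : ∀ i j, i ≠ j → lam i - lam j ∈ nonZeroDivisors R)
    (A : Matrix (Σ i, Fin (d i)) (Σ i, Fin (d i)) R)
    (hA : ∃ Q : GL (Σ i, Fin (d i)) R,
      A = (Q : Matrix (Σ i, Fin (d i)) (Σ i, Fin (d i)) R) *
        Matrix.diagonal (fun p => lam p.1) *
        ((Q⁻¹ : GL (Σ i, Fin (d i)) R) : Matrix (Σ i, Fin (d i)) (Σ i, Fin (d i)) R))
    (X : Matrix (Σ i, Fin (d i)) (Σ i, Fin (d i)) R)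
    (hX : IsNilpotent X)
    (h : X * A - A * X = X ^ α * Polynomial.aeval X g) :
    (∃ (P : GL (Σ i, Fin (d i)) R)
        (Xb : ∀ i, Matrix (Fin (d i)) (Fin (d i)) R),
      A = (P : Matrix (Σ i, Fin (d i)) (Σ i, Fin (d i)) R) *
        Matrix.diagonal (fun p => lam p.1) *
        ((P⁻¹ : GL (Σ i, Fin (d i)) R) : Matrix (Σ i, Fin (d i)) (Σ i, Fin (d i)) R) ∧
      X = (P : Matrix (Σ i, Fin (d i)) (Σ i, Fin (d i)) R) *
        Matrix.blockDiagonal' Xb *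
        ((P⁻¹ : GL (Σ i, Fin (d i)) R) : Matrix (Σ i, Fin (d i)) (Σ i, Fin (d i)) R) ∧
      ∀ i, (Xb i) ^ α * Polynomial.aeval (Xb i) g = 0) ∧
    A * X = X * A := by
  obtain ⟨Q, rfl⟩ := hA
  set D : Matrix (Σ i, Fin (d i)) (Σ i, Fin (d i)) R := diagonal fun p => lam p.1
  let φ := MulSemiringAction.toAlgEquiv R (Matrix (Σ i, Fin (d i)) (Σ i, Fin (d i)) R)
    (ConjAct.toConjAct Q)
  obtain ⟨Y, rfl⟩ : ∃ Y, X = φ Y := ⟨φ.symm X, (φ.apply_symm_apply X).symm⟩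
  change φ Y * φ D - φ D * φ Y = φ Y ^ α * aeval (φ Y) g at h
  have hY : Y * D - D * Y = aeval Y (X ^ α * g) := φ.injective <| by
    rwa [map_sub, map_mul, map_mul, ← aeval_algHom_apply, map_mul, map_pow, aeval_X]
  obtain ⟨N, hN⟩ := exists_iterate_mul_sub_mul_eq_zero (k := α - 1) (by omega)
    (by rw [Nat.sub_add_cancel (by omega)]; exact dvd_mul_right _ _) hY
    (by simpa using hX.map φ.symm)
  have hoff : ∀ p q : Σ i, Fin (d i), p.1 ≠ q.1 → Y p q = 0 := fun p q hpq =>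
    apply_eq_zero_of_iterate_mul_diagonal_sub_diagonal_mul_eq_zero hN (hreg _ _ hpq.symm)
  have hcomm : Commute Y D :=
    commute_diagonal_of_apply_eq_zero fun p q hpq => hoff p q fun h => hpq (congrArg lam h)
  have hYb := eq_blockDiagonal'_blockDiag' hoff
  refine ⟨⟨Q, blockDiag' Y, rfl, by rw [← hYb]; rfl, fun i => ?_⟩, ?_⟩
  · have h0 :
        blockDiagonal' (fun i => aeval (blockDiag' Y i) (X ^ α * g)) = blockDiagonal' 0 := by
      rw [← aeval_blockDiagonal', ← hYb, ← hY, hcomm.eq, sub_self, blockDiagonal'_zero]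
    simpa using congrFun (blockDiagonal'_injective h0) i
  · change φ D * φ Y = φ Y * φ D
    rw [← map_mul, ← map_mul, hcomm.eq]

/-- Let `R` be a commutative ring, `α ≥ 2`, `g` a polynomial with
`g(0) ≠ 0`. Let `A` be similar over `R` to the block diagonal matrix
`diag(λ₁ I_{n₁}, …, λᵣ I_{nᵣ})` (indexed here by `Σ i, Fin (d i)` with `∑ d i = n`),
where each `λᵢ - λⱼ` (`i ≠ j`) is not a zero-divisor. If `X` is a nilpotent solution of
`XA - AX = Xᵅ g(X)`, then there is `P ∈ GLₙ(R)` conjugating `A` to the block diagonal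
matrix and `X` to a block diagonal matrix `diag(X₁, …, Xᵣ)` with `Xᵢᵅ g(Xᵢ) = 0` for
every `i`; in particular `AX = XA`. -/
theorem stmt13 (R : Type*) [CommRing R] (α : ℕ) (hα : 2 ≤ α)
    (g : Polynomial R) (hg : g.eval 0 ≠ 0)
    (n r : ℕ) (d : Fin r → ℕ) (hn : ∑ i, d i = n)
    (lam : Fin r → R)
    (hreg : ∀ i j, i ≠ j → lam i - lam j ∈ nonZeroDivisors R)
    (A : Matrix (Σ i, Fin (d i)) (Σ i, Fin (d i)) R)
    (hA : ∃ Q : GL (Σ i, Fin (d i)) R,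
      A = (Q : Matrix (Σ i, Fin (d i)) (Σ i, Fin (d i)) R) *
        Matrix.diagonal (fun p => lam p.1) *
        ((Q⁻¹ : GL (Σ i, Fin (d i)) R) : Matrix (Σ i, Fin (d i)) (Σ i, Fin (d i)) R))
    (X : Matrix (Σ i, Fin (d i)) (Σ i, Fin (d i)) R)
    (hX : IsNilpotent X)
    (h : X * A - A * X = X ^ α * Polynomial.aeval X g) :
    (∃ (P : GL (Σ i, Fin (d i)) R)
        (Xb : ∀ i, Matrix (Fin (d i)) (Fin (d i)) R),
      A = (P : Matrix (Σ i, Fin (d i)) (Σ i, Fin (d i)) R) *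
        Matrix.diagonal (fun p => lam p.1) *
        ((P⁻¹ : GL (Σ i, Fin (d i)) R) : Matrix (Σ i, Fin (d i)) (Σ i, Fin (d i)) R) ∧
      X = (P : Matrix (Σ i, Fin (d i)) (Σ i, Fin (d i)) R) *
        Matrix.blockDiagonal' Xb *
        ((P⁻¹ : GL (Σ i, Fin (d i)) R) : Matrix (Σ i, Fin (d i)) (Σ i, Fin (d i)) R) ∧
      ∀ i, (Xb i) ^ α * Polynomial.aeval (Xb i) g = 0) ∧
    A * X = X * A :=
  stmt13_general R α hα g r d lam hreg A hA X hX h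
end

section
/- Let $R$ be a commutative ring with unity, $\alpha \geq 2$, and $g$ a polynomial with coefficients in $R$ such that $g(0)$ is a unit of $R$. Let $A \in M_n(R)$ be similar over $R$ to $\mathrm{diag}(\lambda_1 I_{n_1}, \dots, \lambda_r I_{n_r})$ with $n_1 + \dots + n_r = n$, where for every $i \neq j$ the element $\lambda_i - \lambda_j$ is not a zero-divisor in $R$. If $X \in M_n(R)$ is a nilpotent matrix satisfying $XA - AX = X^{\alpha} g(X)$, then $X^{\alpha} = 0$. -/
/-!
Write `δ M = M A - A M`, so that the hypothesis reads `δ X = f(X)` with `f = Xᵅ g`. As `f(X)`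
commutes with `X`, `δ` acts on polynomials in `X` by `δ p(X) = p'(X) f(X)`, hence
`δˢ⁺¹ X = Pₛ(X)` with `P₀ = f`, `Pₛ₊₁ = Pₛ' f`. Since `α ≥ 2`, the `X`-adic order of `Pₛ` grows
with `s`, so `δˢ⁺¹ X = 0` for large `s` because `X` is nilpotent. After conjugating `A` to
diagonal form, `δ` multiplies the `(p, q)` entry by `λ_q - λ_p`, which is either zero or regular;
so `ker δ² = ker δ`, hence `ker δˢ⁺¹ = ker δ`, and `Xᵅ g(X) = δ X = 0`. Finally `g(X)` is a unit,
being `g(0)` plus a nilpotent commuting with it.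
-/

open Polynomial

section Commutator

variable {S T : Type*} [Ring S] [Ring T]

def commutatorRight (D M : S) : S := M * D - D * M

/-- `ker (ad D)² = ker (ad D)`, i.e. `ad D` has no nontrivial Jordan block at `0`. -/
def IsKerStable (D : S) : Prop :=
  ∀ M : S, commutatorRight D (commutatorRight D M) = 0 → commutatorRight D M = 0

lemma commutatorRight_add (D a b : S) :
    commutatorRight D (a + b) = commutatorRight D a + commutatorRight D b := by
  simp only [commutatorRight]; noncomm_ring

lemma commutatorRight_mul (D a b : S) :
    commutatorRight D (a * b) = commutatorRight D a * b + a * commutatorRight D b := by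
  simp only [commutatorRight]; noncomm_ring

lemma map_commutatorRight {F : Type*} [FunLike F S T] [RingHomClass F S T] (φ : F) (D M : S) :
    φ (commutatorRight D M) = commutatorRight (φ D) (φ M) := by
  simp only [commutatorRight, map_sub, map_mul]

lemma IsKerStable.map {D : S} (hD : IsKerStable D) (φ : S ≃+* T) : IsKerStable (φ D) := by
  intro M hM
  obtain ⟨M, rfl⟩ := φ.surjective M
  rw [← map_commutatorRight, ← map_commutatorRight, map_eq_zero_iff φ φ.injective] at hM
  rw [← map_commutatorRight, hD M hM, map_zero]

lemma IsKerStable.eq_zero_of_iterate_eq_zero {D : S} (hD : IsKerStable D) {M : S} (k : ℕ)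
    (hM : (commutatorRight D)^[k + 1] M = 0) : commutatorRight D M = 0 := by
  induction k generalizing M with
  | zero => exact hM
  | succ k ih => exact hD M (ih hM)

end Commutator

section Polynomial

variable {R S : Type*} [CommRing R] [Ring S] [Algebra R S]

lemma commutatorRight_aeval {D Y : S} (hY : Commute Y (commutatorRight D Y)) (p : R[X]) :
    commutatorRight D (aeval Y p) = aeval Y (derivative p) * commutatorRight D Y := by
  induction p using Polynomial.induction_on with
  | C a => simp [commutatorRight, Algebra.commutes]
  | add p q hp hq => rw [map_add, commutatorRight_add, hp, hq, derivative_add, map_add, add_mul]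
  | monomial n a ih =>
    rw [pow_succ, ← mul_assoc]
    generalize C a * X ^ n = P at ih ⊢
    rw [map_mul, aeval_X, commutatorRight_mul, ih, derivative_mul, derivative_X, mul_one,
      map_add, map_mul, aeval_X, add_mul, mul_assoc, ← hY.eq, mul_assoc]

lemma commutatorRight_iterate_eq_aeval {D Y : S} {f : R[X]}
    (hY : commutatorRight D Y = aeval Y f) (s : ℕ) :
    (commutatorRight D)^[s + 1] Y = aeval Y ((fun p ↦ derivative p * f)^[s] f) := by
  have hc : Commute Y (commutatorRight D Y) := by
    simpa [hY] using (Commute.all X f).map (aeval Y)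
  induction s with
  | zero => exact hY
  | succ s ih =>
    rw [Function.iterate_succ_apply', ih, commutatorRight_aeval hc, hY, ← map_mul,
      Function.iterate_succ_apply']

lemma X_pow_dvd_iterate_derivative_mul {f : R[X]} {α : ℕ} (hα : 2 ≤ α) (hf : X ^ α ∣ f)
    (s : ℕ) : X ^ (α + s) ∣ (fun p ↦ derivative p * f)^[s] f := by
  induction s with
  | zero => exact hf
  | succ s ih =>
    rw [Function.iterate_succ_apply']
    calc X ^ (α + (s + 1)) ∣ X ^ (α + s - 1) * X ^ α := by
          rw [← pow_add]; exact pow_dvd_pow _ (by omega)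
      _ ∣ _ := mul_dvd_mul (pow_sub_one_dvd_derivative_of_pow_dvd ih) hf

lemma isUnit_aeval_of_isNilpotent {Y : S} (hY : IsNilpotent Y) {g : R[X]}
    (hg : IsUnit (g.eval 0)) : IsUnit (aeval Y g) := by
  obtain ⟨q, hq⟩ := X_dvd_sub_C (p := g)
  rw [sub_eq_iff_eq_add'] at hq
  have hgY : aeval Y g = algebraMap R S (g.eval 0) + Y * aeval Y q := by
    conv_lhs => rw [hq]
    rw [map_add, map_mul, aeval_C, aeval_X, coeff_zero_eq_eval_zero]
  have hYq : Commute Y (aeval Y q) := by simpa using (Commute.all X q).map (aeval Y)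
  rw [hgY]
  exact (hYq.isNilpotent_mul_right hY).isUnit_add_left_of_commute (hg.map _)
    (Algebra.commutes _ _).symm

theorem pow_eq_zero_of_commutatorRight_eq {D Y : S} (hD : IsKerStable D) {α : ℕ} (hα : 2 ≤ α)
    {g : R[X]} (hg : IsUnit (g.eval 0)) (hY : IsNilpotent Y)
    (h : commutatorRight D Y = Y ^ α * aeval Y g) : Y ^ α = 0 := by
  obtain ⟨K, hK⟩ := hY
  have hf : commutatorRight D Y = aeval Y (X ^ α * g) := by rw [h, map_mul, map_pow, aeval_X]
  have hvanish : (commutatorRight D)^[K + 1] Y = 0 := by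
    obtain ⟨q, hq⟩ := X_pow_dvd_iterate_derivative_mul hα (dvd_mul_right _ g) K
    rw [commutatorRight_iterate_eq_aeval hf, hq, map_mul, map_pow, aeval_X,
      pow_eq_zero_of_le (by omega) hK, zero_mul]
  have hzero : Y ^ α * aeval Y g = 0 := h ▸ hD.eq_zero_of_iterate_eq_zero K hvanish
  exact (isUnit_aeval_of_isNilpotent ⟨K, hK⟩ hg).mul_left_eq_zero.mp hzero

end Polynomial

namespace Matrix

variable {R ι : Type*} [CommRing R] [Fintype ι] [DecidableEq ι]

lemma commutatorRight_diagonal_apply (μ : ι → R) (M : Matrix ι ι R) (p q : ι) :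
    commutatorRight (diagonal μ) M p q = (μ q - μ p) * M p q := by
  simp only [commutatorRight, sub_apply, mul_diagonal, diagonal_mul]; ring

lemma isKerStable_diagonal {μ : ι → R} (hμ : ∀ i j, μ i ≠ μ j → μ i - μ j ∈ nonZeroDivisors R) :
    IsKerStable (diagonal μ) := by
  intro M hM
  ext p q
  have hpq := congr_fun₂ hM p q
  rw [commutatorRight_diagonal_apply, commutatorRight_diagonal_apply, zero_apply] at hpq
  rw [commutatorRight_diagonal_apply, zero_apply]
  by_cases hμpq : μ q = μ p
  · simp [hμpq]
  · exact (mul_left_mem_nonZeroDivisors_eq_zero_iff (hμ _ _ hμpq)).mp hpq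

end Matrix

theorem stmt14_general (R : Type*) [CommRing R] (α : ℕ) (hα : 2 ≤ α)
    (g : Polynomial R) (hg : IsUnit (g.eval 0))
    (r : ℕ) (d : Fin r → ℕ)
    (lam : Fin r → R)
    (hreg : ∀ i j, i ≠ j → lam i - lam j ∈ nonZeroDivisors R)
    (A : Matrix (Σ i, Fin (d i)) (Σ i, Fin (d i)) R)
    (hA : ∃ Q : GL (Σ i, Fin (d i)) R,
      A = (Q : Matrix (Σ i, Fin (d i)) (Σ i, Fin (d i)) R) *
        Matrix.diagonal (fun p => lam p.1) *
        ((Q⁻¹ : GL (Σ i, Fin (d i)) R) : Matrix (Σ i, Fin (d i)) (Σ i, Fin (d i)) R))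
    (X : Matrix (Σ i, Fin (d i)) (Σ i, Fin (d i)) R)
    (hX : IsNilpotent X)
    (h : X * A - A * X = X ^ α * Polynomial.aeval X g) :
    X ^ α = 0 := by
  obtain ⟨Q, rfl⟩ := hA
  have hdiag : IsKerStable (Matrix.diagonal fun p : Σ i, Fin (d i) ↦ lam p.1) :=
    Matrix.isKerStable_diagonal fun p q hpq ↦ hreg _ _ fun hfst ↦ hpq (congrArg lam hfst)
  refine pow_eq_zero_of_commutatorRight_eq ?_ hα hg hX h
  simpa [ConjAct.units_smul_def] using
    hdiag.map (MulSemiringAction.toRingEquiv _ _ (ConjAct.toConjAct Q))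

/-- Let `R` be a commutative ring, `α ≥ 2`, `g` a polynomial with
`g(0)` a unit. Let `A` be similar over `R` to `diag(λ₁ I_{n₁}, …, λᵣ I_{nᵣ})` (indexed
here by `Σ i, Fin (d i)` with `∑ d i = n`), where each `λᵢ - λⱼ` (`i ≠ j`) is not a
zero-divisor. If `X` is a nilpotent solution of `XA - AX = Xᵅ g(X)`, then `Xᵅ = 0`. -/
theorem stmt14 (R : Type*) [CommRing R] (α : ℕ) (hα : 2 ≤ α)
    (g : Polynomial R) (hg : IsUnit (g.eval 0))
    (n r : ℕ) (d : Fin r → ℕ) (hn : ∑ i, d i = n)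
    (lam : Fin r → R)
    (hreg : ∀ i j, i ≠ j → lam i - lam j ∈ nonZeroDivisors R)
    (A : Matrix (Σ i, Fin (d i)) (Σ i, Fin (d i)) R)
    (hA : ∃ Q : GL (Σ i, Fin (d i)) R,
      A = (Q : Matrix (Σ i, Fin (d i)) (Σ i, Fin (d i)) R) *
        Matrix.diagonal (fun p => lam p.1) *
        ((Q⁻¹ : GL (Σ i, Fin (d i)) R) : Matrix (Σ i, Fin (d i)) (Σ i, Fin (d i)) R))
    (X : Matrix (Σ i, Fin (d i)) (Σ i, Fin (d i)) R)
    (hX : IsNilpotent X)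
    (h : X * A - A * X = X ^ α * Polynomial.aeval X g) :
    X ^ α = 0 :=
  stmt14_general R α hα g hg r d lam hreg A hA X hX h
end

section
/- Let $R$ be a commutative ring with unity and let $A \in M_n(R)$ be similar over $R$ to $\mathrm{diag}(\lambda_1, \dots, \lambda_n)$, where for every $i \neq j$ the element $\lambda_i - \lambda_j$ is not a zero-divisor in $R$. Let $B \in M_n(R)$. If $A$ commutes with the commutator $AB - BA$, then $AB = BA$. -/
namespace Matrix

variable {ι R : Type*} [Fintype ι] [DecidableEq ι] [CommRing R]

theorem diagonal_mul_sub_mul_diagonal_apply (d : ι → R) (M : Matrix ι ι R) (i j : ι) :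
    (diagonal d * M - M * diagonal d) i j = (d i - d j) * M i j := by
  simp only [sub_apply, diagonal_mul, mul_diagonal, sub_mul, mul_comm (M i j)]

/-- Entrywise, `[D, [D, M]]` is `(dᵢ - dⱼ)² Mᵢⱼ`, so it kills the off-diagonal entries of `M`
as soon as the differences `dᵢ - dⱼ` are regular. -/
theorem commute_diagonal_of_commute_commutator {d : ι → R}
    (hd : Pairwise fun i j => d i - d j ∈ nonZeroDivisors R) {M : Matrix ι ι R}
    (h : Commute (diagonal d) (diagonal d * M - M * diagonal d)) :
    Commute (diagonal d) M := by
  rw [commute_iff_eq, ← sub_eq_zero] at h ⊢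
  ext i j
  have hij : (d i - d j) ^ 2 * M i j = 0 := by
    simpa only [diagonal_mul_sub_mul_diagonal_apply, zero_apply, ← mul_assoc, ← sq]
      using congrFun (congrFun h i) j
  rw [diagonal_mul_sub_mul_diagonal_apply, zero_apply]
  rcases eq_or_ne i j with rfl | hne
  · rw [sub_self, zero_mul]
  · rw [(mul_left_mem_nonZeroDivisors_eq_zero_iff (pow_mem (hd hne) 2)).mp hij, mul_zero]

end Matrix

/-- Let `R` be a commutative ring and `A ∈ Mₙ(R)` similar over `R` to
`diag(λ₁, …, λₙ)` where each `λᵢ - λⱼ` (`i ≠ j`) is not a zero-divisor. If `A` commutes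
with the commutator `AB - BA`, then `AB = BA`. -/
theorem stmt17 (R : Type*) [CommRing R] (n : ℕ)
    (lam : Fin n → R)
    (hreg : ∀ i j, i ≠ j → lam i - lam j ∈ nonZeroDivisors R)
    (A : Matrix (Fin n) (Fin n) R)
    (hA : ∃ Q : GL (Fin n) R,
      A = (Q : Matrix (Fin n) (Fin n) R) * Matrix.diagonal lam *
        ((Q⁻¹ : GL (Fin n) R) : Matrix (Fin n) (Fin n) R))
    (B : Matrix (Fin n) (Fin n) R)
    (hcomm : A * (A * B - B * A) = (A * B - B * A) * A) :
    A * B = B * A := by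
  obtain ⟨Q, rfl⟩ := hA
  -- Conjugation by `Q` is a ring automorphism; pull everything back to `diagonal lam`.
  set φ := MulSemiringAction.toRingEquiv (ConjAct (GL (Fin n) R)) (Matrix (Fin n) (Fin n) R)
    (ConjAct.toConjAct Q)
  have hφ (M : Matrix (Fin n) (Fin n) R) :
      φ M = (Q : Matrix (Fin n) (Fin n) R) * M * ((Q⁻¹ : GL (Fin n) R) : Matrix (Fin n) (Fin n) R) :=
    rfl
  rw [← hφ, ← φ.apply_symm_apply B] at hcomm ⊢
  simp only [← map_mul, ← map_sub, φ.injective.eq_iff] at hcomm ⊢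
  exact Matrix.commute_diagonal_of_commute_commutator hreg hcomm
end

section
/- Let $R$ be a commutative ring with unity, $\alpha \geq 2$, and $g$ a polynomial with coefficients in $R$. Let $A \in M_n(R)$ and let $X \in M_n(R)$ be a nilpotent matrix satisfying $XA - AX = X^{\alpha} g(X)$. Then for every polynomial $u \in R[x]$ divisible by $x^m$ (i.e. of valuation at least $m$) and every integer $l \geq 0$, there exist polynomials $v_0, \dots, v_l \in R[x]$, each divisible by $x^m$, such that $u(X) A^l = \sum_{i=0}^{l} A^i v_i(X)$. -/
/-!
Write `c = Xᵅ g(X)`, so that `X A = A X + c` with `c` commuting with `X`. Then `[·, A]` acts on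
polynomials in `X` as a derivation: `p(X) A = A p(X) + p'(X) c`. Multiplying `u(X) Aˡ` by one
more `A` and commuting it past each `vᵢ(X)` therefore produces the terms `Aⁱ⁺¹ vᵢ(X)` and
`Aⁱ (vᵢ' · xᵅ g)(X)`, and `xᵐ ∣ vᵢ` implies `xᵐ ∣ vᵢ' · xᵅ g` because `α ≥ 1`.
-/

open Polynomial

theorem pow_dvd_derivative_mul_of_pow_dvd {R : Type*} [CommRing R] {p u r : R[X]} {m : ℕ}
    (hu : p ^ m ∣ u) (hr : p ∣ r) : p ^ m ∣ derivative u * r :=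
  calc p ^ m ∣ p ^ (m - 1) * p := by rw [← pow_succ]; exact pow_dvd_pow p (by omega)
    _ ∣ derivative u * r := mul_dvd_mul (pow_sub_one_dvd_derivative_of_pow_dvd hu) hr

section Commutator

variable {R S : Type*} [CommRing R] [Ring S] [Algebra R S] {a x : S}

theorem aeval_mul_eq_mul_aeval_add_aeval_derivative_mul {c : S} (hxc : Commute x c)
    (hxa : x * a = a * x + c) (p : R[X]) :
    aeval x p * a = a * aeval x p + aeval x (derivative p) * c := by
  induction p using Polynomial.induction_on with
  | C r => simp [Algebra.commutes]
  | add p q hp hq =>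
    simp only [map_add, add_mul, mul_add, hp, hq]
    abel
  | monomial k r ih =>
    rw [pow_succ, ← mul_assoc]
    generalize C r * X ^ k = p at ih ⊢
    rw [derivative_mul, derivative_X, mul_one, map_add, map_mul, map_mul, aeval_X]
    calc aeval x p * x * a = (aeval x p * a) * x + aeval x p * c := by
          rw [mul_assoc, hxa, mul_add, mul_assoc]
      _ = a * (aeval x p * x) + (aeval x (derivative p) * x + aeval x p) * c := by
          rw [ih, add_mul, mul_assoc _ c, ← hxc.eq]
          noncomm_ring

theorem exists_aeval_mul_pow_eq_sum_pow_mul_aeval {q : R[X]} (hxa : x * a = a * x + aeval x q)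
    {I : Ideal R[X]} (hI : ∀ v ∈ I, derivative v * q ∈ I) {u : R[X]} (hu : u ∈ I) (l : ℕ) :
    ∃ v : Fin (l + 1) → R[X], (∀ i, v i ∈ I) ∧
      aeval x u * a ^ l = ∑ i : Fin (l + 1), a ^ (i : ℕ) * aeval x (v i) := by
  have hxq : Commute x (aeval x q) := by
    simpa using (Commute.all X q).map (aeval x : R[X] →ₐ[R] S)
  induction l with
  | zero => exact ⟨fun _ ↦ u, fun _ ↦ hu, by simp⟩
  | succ l ih =>
    obtain ⟨v, hvI, hv⟩ := ih
    refine ⟨fun i ↦ (Fin.snoc (fun i ↦ derivative (v i) * q) 0 : Fin (l + 2) → R[X]) i +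
      (Fin.cons 0 v : Fin (l + 2) → R[X]) i, fun i ↦ I.add_mem ?_ ?_, ?_⟩
    · induction i using Fin.lastCases with
      | last => rw [Fin.snoc_last]; exact I.zero_mem
      | cast i => rw [Fin.snoc_castSucc]; exact hI _ (hvI i)
    · induction i using Fin.cases with
      | zero => rw [Fin.cons_zero]; exact I.zero_mem
      | succ i => rw [Fin.cons_succ]; exact hvI i
    calc aeval x u * a ^ (l + 1) = ∑ i : Fin (l + 1), a ^ (i : ℕ) * (aeval x (v i) * a) := by
          rw [pow_succ, ← mul_assoc, hv, Finset.sum_mul]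
          simp only [mul_assoc]
      _ = ∑ i : Fin (l + 1), (a ^ (i : ℕ) * aeval x (derivative (v i) * q)
            + a ^ ((i : ℕ) + 1) * aeval x (v i)) := by
          refine Finset.sum_congr rfl fun i _ ↦ ?_
          rw [aeval_mul_eq_mul_aeval_add_aeval_derivative_mul hxq hxa, map_mul, pow_succ]
          noncomm_ring
      _ = _ := by
          simp only [map_add, mul_add, Finset.sum_add_distrib]
          rw [Fin.sum_univ_castSucc (n := l + 1), Fin.sum_univ_succ (n := l + 1)]
          simp

end Commutator

theorem stmt19_general (R : Type*) [CommRing R] (n α : ℕ) (hα : 2 ≤ α)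
    (g : Polynomial R)
    (A X : Matrix (Fin n) (Fin n) R)
    (h : X * A - A * X = X ^ α * Polynomial.aeval X g)
    (m : ℕ) (u : Polynomial R) (hu : Polynomial.X ^ m ∣ u) (l : ℕ) :
    ∃ v : Fin (l + 1) → Polynomial R,
      (∀ i, Polynomial.X ^ m ∣ v i) ∧
      Polynomial.aeval X u * A ^ l =
        ∑ i : Fin (l + 1), A ^ (i : ℕ) * Polynomial.aeval X (v i) := by
  have hXA : X * A = A * X + aeval X (Polynomial.X ^ α * g) := by
    rw [← sub_eq_iff_eq_add', h, map_mul, map_pow, aeval_X]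
  have hX_dvd : (Polynomial.X : R[X]) ∣ Polynomial.X ^ α * g :=
    (dvd_pow_self _ (by omega)).mul_right g
  obtain ⟨v, hv, huv⟩ := exists_aeval_mul_pow_eq_sum_pow_mul_aeval hXA
    (I := Ideal.span {Polynomial.X ^ m})
    (by simpa only [Ideal.mem_span_singleton] using fun v hv ↦
      pow_dvd_derivative_mul_of_pow_dvd hv hX_dvd)
    (Ideal.mem_span_singleton.2 hu) l
  exact ⟨v, fun i ↦ Ideal.mem_span_singleton.1 (hv i), huv⟩

/-- Let `R` be a commutative ring, `α ≥ 2`, `g` a polynomial over `R`,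
`A ∈ Mₙ(R)`, and `X ∈ Mₙ(R)` a nilpotent matrix with `XA - AX = Xᵅ g(X)`. Then for every
polynomial `u` divisible by `x^m` (valuation at least `m`) and every `l ≥ 0`, there are
polynomials `v₀, …, v_l`, each divisible by `x^m`, with `u(X) Aˡ = ∑ᵢ Aⁱ vᵢ(X)`. -/
theorem stmt19 (R : Type*) [CommRing R] (n α : ℕ) (hα : 2 ≤ α)
    (g : Polynomial R)
    (A X : Matrix (Fin n) (Fin n) R) (hX : IsNilpotent X)
    (h : X * A - A * X = X ^ α * Polynomial.aeval X g)
    (m : ℕ) (u : Polynomial R) (hu : Polynomial.X ^ m ∣ u) (l : ℕ) :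
    ∃ v : Fin (l + 1) → Polynomial R,
      (∀ i, Polynomial.X ^ m ∣ v i) ∧
      Polynomial.aeval X u * A ^ l =
        ∑ i : Fin (l + 1), A ^ (i : ℕ) * Polynomial.aeval X (v i) :=
  stmt19_general R n α hα g A X h m u hu l
end
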